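/- arXiv:1902.02459 — 5 statements merged into one kernel-verified Lean document; each statement's English description precedes it below -/
import Mathlib

section
/- Let d ≥ 4 and let ‖·‖_X be a symmetric norm on ℝ^d with ‖e₁‖_X = 1 whose type-2 constant is at most T for some T ≥ 1. Fix t ∈ (0,1] and let x ∈ ℝ^d satisfy ‖x‖_∞ ≤ t and ‖x‖_2 ≤ m_X(t). Then ‖x‖_X ≤ 3·T·log₂ d. -/
open Finset

/-- `sgn b` is the real sign `±1` encoded by a Boolean. -/
noncomputable def sgn (b : Bool) : ℝ := if b then 1 else -1

section Basics
variable {d : ℕ} {N : (Fin d → ℝ) → ℝ}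
  (hN_add : ∀ x y : Fin d → ℝ, N (x + y) ≤ N x + N y)
  (hN_smul : ∀ (c : ℝ) (x : Fin d → ℝ), N (c • x) = |c| * N x)

include hN_smul in
lemma N_zero : N 0 = 0 := by
  have := hN_smul 0 0
  simpa using this

include hN_add hN_smul in
lemma N_nonneg (x : Fin d → ℝ) : 0 ≤ N x := by
  have h1 : N (-x) = N x := by
    have := hN_smul (-1) x
    simpa using this
  have h2 : N (x + (-x)) ≤ N x + N (-x) := hN_add x (-x)
  rw [add_neg_cancel, N_zero hN_smul, h1] at h2
  linarith

include hN_add hN_smul in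
lemma N_sum {ι : Type*} (s : Finset ι) (f : ι → Fin d → ℝ) :
    N (∑ i ∈ s, f i) ≤ ∑ i ∈ s, N (f i) := by
  classical
  induction s using Finset.induction_on with
  | empty => simp [N_zero hN_smul]
  | insert a s hne ih =>
    rw [Finset.sum_insert hne, Finset.sum_insert hne]
    exact (hN_add _ _).trans (by linarith)
end Basics

section Mono
variable {d : ℕ} {N : (Fin d → ℝ) → ℝ}
  (hN_add : ∀ x y : Fin d → ℝ, N (x + y) ≤ N x + N y)
  (hN_smul : ∀ (c : ℝ) (x : Fin d → ℝ), N (c • x) = |c| * N x)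
  (hN_symm : ∀ (π : Equiv.Perm (Fin d)) (σ : Fin d → ℝ),
      (∀ i, σ i = 1 ∨ σ i = -1) →
      ∀ x : Fin d → ℝ, N (fun i => σ i * x (π i)) = N x)

include hN_add hN_smul hN_symm in
lemma N_update (z : Fin d → ℝ) (a : Fin d) (c : ℝ) (hc : |c| ≤ |z a|) :
    N (Function.update z a c) ≤ N z := by
  by_cases hz : z a = 0
  · have hc0 : c = 0 := by rw [hz] at hc; simpa using abs_nonpos_iff.mp (by simpa using hc)
    have : Function.update z a c = z := by
      funext i
      by_cases hi : i = a
      · subst hi; simp [hc0, hz]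
      · simp [Function.update, hi]
    rw [this]
  · set θ : ℝ := c / z a with hθdef
    have hθ : |θ| ≤ 1 := by
      rw [hθdef, abs_div]
      rw [div_le_one (abs_pos.mpr hz)]; exact hc
    have hθ1 : -1 ≤ θ := by cases abs_le.mp hθ; assumption
    have hθ2 : θ ≤ 1 := by cases abs_le.mp hθ; assumption
    set σ : Fin d → ℝ := fun i => if i = a then -1 else 1 with hσdef
    set w : Fin d → ℝ := fun i => σ i * z i with hwdef
    have hNw : N w = N z := by
      have := hN_symm (Equiv.refl (Fin d)) σ (fun i => by by_cases h : i = a <;> simp [hσdef, h]) z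
      simpa [hwdef] using this
    have hdecomp : Function.update z a c = ((1 + θ)/2) • z + ((1 - θ)/2) • w := by
      funext i
      by_cases hi : i = a
      · subst hi
        simp only [Function.update_self, Pi.add_apply, Pi.smul_apply, smul_eq_mul, hwdef, hσdef,
          if_pos rfl, ↓reduceIte]
        field_simp [hθdef]
        rw [show z i * (1 + θ + -(1 - θ)) = 2 * (z i * θ) by ring, show z i * θ = c by rw [hθdef]; field_simp]
        ring
      · simp only [Function.update, dif_neg hi, Pi.add_apply, Pi.smul_apply, smul_eq_mul, hwdef,
          hσdef, if_neg hi]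
        ring
    calc N (Function.update z a c) ≤ N (((1 + θ)/2) • z) + N (((1 - θ)/2) • w) := by
          rw [hdecomp]; exact hN_add _ _
      _ = ((1 + θ)/2) * N z + ((1 - θ)/2) * N w := by
          rw [hN_smul, hN_smul, abs_of_nonneg (by linarith), abs_of_nonneg (by linarith)]
      _ = N z := by rw [hNw]; ring

include hN_add hN_smul hN_symm in
lemma N_mono (y z : Fin d → ℝ) (h : ∀ i, |y i| ≤ |z i|) : N y ≤ N z := by
  classical
  suffices H : ∀ s : Finset (Fin d), ∀ y z : Fin d → ℝ, (∀ i, |y i| ≤ |z i|) →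
      (∀ i, i ∉ s → y i = z i) → N y ≤ N z by
    exact H Finset.univ y z h (by simp)
  intro s
  induction s using Finset.induction_on with
  | empty =>
    intro y z _ h2
    have : y = z := funext fun i => h2 i (by simp)
    rw [this]
  | insert a s hne ih =>
    intro y z h1 h2
    set z' := Function.update z a (y a) with hz'
    have step : N z' ≤ N z := N_update hN_add hN_smul hN_symm z a (y a) (h1 a)
    have : N y ≤ N z' := by
      apply ih y z'
      · intro i
        by_cases hi : i = a
        · subst hi; simp [hz']
        · simp [hz', Function.update, hi, h1 i]
      · intro i hi
        by_cases hia : i = a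
        · subst hia; simp [hz']
        · simp only [hz', Function.update, dif_neg hia]
          exact h2 i (by simp [hia, hi])
    linarith
end Mono

section Perm
variable {d : ℕ} {N : (Fin d → ℝ) → ℝ}
  (hN_symm : ∀ (π : Equiv.Perm (Fin d)) (σ : Fin d → ℝ),
      (∀ i, σ i = 1 ∨ σ i = -1) →
      ∀ x : Fin d → ℝ, N (fun i => σ i * x (π i)) = N x)

lemma subtypeCongr_prop {α : Type*} {p q : α → Prop} [DecidablePred p] [DecidablePred q]
    (e : { x // p x } ≃ { x // q x }) (f : { x // ¬p x } ≃ { x // ¬q x }) (x : α) :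
    q (Equiv.subtypeCongr e f x) ↔ p x := by
  by_cases h : p x
  · have : Equiv.subtypeCongr e f x = ↑(e ⟨x, h⟩) := by
      simp [Equiv.subtypeCongr, h]
    rw [this]
    exact ⟨fun _ => h, fun _ => (e ⟨x, h⟩).prop⟩
  · have : Equiv.subtypeCongr e f x = ↑(f ⟨x, h⟩) := by
      simp [Equiv.subtypeCongr, h]
    rw [this]
    exact ⟨fun hq => absurd hq (f ⟨x, h⟩).prop, fun hp => absurd hp h⟩

include hN_symm in
lemma N_rearrange (B : Finset (Fin d)) (c : ℝ) :
    N (fun i => if i ∈ B then c else 0) = N (fun i => if (i : ℕ) < B.card then c else 0) := by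
  classical
  have hcard : B.card ≤ d := by
    simpa using Finset.card_le_card (Finset.subset_univ B)
  set C : Finset (Fin d) := Finset.attachFin (Finset.range B.card)
    (fun m hm => lt_of_lt_of_le (Finset.mem_range.mp hm) hcard) with hC
  have hmemC : ∀ i : Fin d, i ∈ C ↔ (i : ℕ) < B.card := by
    intro i; simp [hC, Finset.mem_attachFin]
  have hcardC : C.card = B.card := by
    simp [hC, Finset.card_attachFin]
  have h1 : Fintype.card { i : Fin d // i ∈ C } = Fintype.card { i : Fin d // i ∈ B } := by
    simp [Fintype.card_coe, hcardC]
  have h2 : Fintype.card { i : Fin d // ¬ i ∈ C } = Fintype.card { i : Fin d // ¬ i ∈ B } := by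
    rw [Fintype.card_subtype_compl, Fintype.card_subtype_compl, Fintype.card_coe,
      Fintype.card_coe, hcardC]
  set π : Equiv.Perm (Fin d) :=
    Equiv.subtypeCongr (Fintype.equivOfCardEq h1) (Fintype.equivOfCardEq h2) with hπ
  have hπB : ∀ i, π i ∈ B ↔ i ∈ C := fun i => subtypeCongr_prop _ _ i
  have := hN_symm π (fun _ => 1) (fun _ => Or.inl rfl) (fun i => if i ∈ B then c else 0)
  have heq : (fun i => (1:ℝ) * (if π i ∈ B then c else 0)) =
      (fun i : Fin d => if (i : ℕ) < B.card then c else 0) := by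
    funext i
    rw [one_mul]
    by_cases h : i ∈ C
    · rw [if_pos ((hπB i).mpr h), if_pos ((hmemC i).mp h)]
    · rw [if_neg (fun hb => h ((hπB i).mp hb)), if_neg (fun hb => h ((hmemC i).mpr hb))]
  rw [heq] at this
  exact this.symm
end Perm

lemma binsum : ∀ (k m : ℕ), m < 2 ^ k → ∑ j ∈ Finset.range k, (m / 2 ^ j % 2) * 2 ^ j = m := by
  intro k
  induction k with
  | zero => intro m hm; interval_cases m; simp
  | succ k ih =>
    intro m hm
    rw [Finset.sum_range_succ']
    have h2 : m / 2 < 2 ^ k := by omega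
    have ihm := ih (m / 2) h2
    have hterm : ∀ j, m / 2 ^ (j + 1) % 2 * 2 ^ (j + 1) = (m / 2 / 2 ^ j % 2 * 2 ^ j) * 2 := by
      intro j
      have h1 : m / 2 ^ (j + 1) = m / 2 / 2 ^ j := by
        rw [Nat.div_div_eq_div_mul, pow_succ']
      rw [h1, pow_succ]; ring
    rw [Finset.sum_congr rfl (fun j _ => hterm j), ← Finset.sum_mul, ihm]
    simp; omega

section Block
variable {d : ℕ} {N : (Fin d → ℝ) → ℝ} {T t : ℝ} {ℓ : ℕ}
  (hN_add : ∀ x y : Fin d → ℝ, N (x + y) ≤ N x + N y)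
  (hN_smul : ∀ (c : ℝ) (x : Fin d → ℝ), N (c • x) = |c| * N x)
  (hN_symm : ∀ (π : Equiv.Perm (Fin d)) (σ : Fin d → ℝ),
      (∀ i, σ i = 1 ∨ σ i = -1) →
      ∀ x : Fin d → ℝ, N (fun i => σ i * x (π i)) = N x)
  (hT2 : ∀ (n : ℕ) (x : Fin n → Fin d → ℝ),
      Real.sqrt ((∑ ε : Fin n → Bool, N (∑ i, sgn (ε i) • x i) ^ 2) / 2 ^ n)
        ≤ T * Real.sqrt (∑ i, N (x i) ^ 2))
  (hT : 1 ≤ T) (ht0 : 0 < t)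
  (hℓpos : 1 ≤ ℓ)
  (hℓ1 : N (fun i => if (i : ℕ) < ℓ then t else 0) ≤ 1)

include hN_add hN_smul hN_symm hℓ1 ht0 in
lemma N_small (B : Finset (Fin d)) (hB : B.card ≤ ℓ) :
    N (fun i => if i ∈ B then t else 0) ≤ 1 := by
  rw [N_rearrange hN_symm]
  refine le_trans (N_mono hN_add hN_smul hN_symm _ _ ?_) hℓ1
  intro i
  by_cases h : (i : ℕ) < B.card
  · rw [if_pos h, if_pos (lt_of_lt_of_le h hB)]
  · rw [if_neg h]; simp [abs_nonneg]

include hN_add hN_smul hN_symm hT2 hT ht0 hℓpos hℓ1 in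
lemma N_block (a : ℕ) (B : Finset (Fin d)) (hB : B.card ≤ 4 ^ a * ℓ) :
    N (fun i => if i ∈ B then t else 0) ≤ 2 ^ a * T := by
  classical
  rw [N_rearrange hN_symm]
  set m := B.card with hm
  set n := 4 ^ a with hn
  have hnpos : 0 < n := by positivity
  set u : Fin d → ℝ := fun i => if (i : ℕ) < m then t else 0 with hu
  set Bl : Fin n → Finset (Fin d) :=
    fun r => Finset.univ.filter (fun i => (i : ℕ) / ℓ = (r : ℕ) ∧ (i : ℕ) < m) with hBl
  set xv : Fin n → Fin d → ℝ := fun r i => if i ∈ Bl r then t else 0 with hxv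
  -- each block is small
  have hsmall : ∀ r, N (xv r) ≤ 1 := by
    intro r
    apply N_small hN_add hN_smul hN_symm ht0 hℓ1
    refine le_trans (Finset.card_le_card_of_injOn (fun i => (i : ℕ) % ℓ)
      (t := Finset.range ℓ) ?_ ?_) (by simp)
    · intro i _
      exact Finset.mem_range.mpr (Nat.mod_lt _ (by omega))
    · intro i hi i' hi' hmod
      simp only [hBl, Finset.mem_coe, Finset.mem_filter] at hi hi'
      have hq : (i : ℕ) / ℓ = (i' : ℕ) / ℓ := by rw [hi.2.1, hi'.2.1]
      have h3 : ℓ * ((i : ℕ) / ℓ) = ℓ * ((i' : ℕ) / ℓ) := by rw [hq]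
      have h1 := Nat.div_add_mod (i : ℕ) ℓ
      have h2 := Nat.div_add_mod (i' : ℕ) ℓ
      simp only at hmod
      exact Fin.ext (by omega)
  -- each signed sum is a sign-flip of u
  have hsum : ∀ ε : Fin n → Bool, N (∑ r, sgn (ε r) • xv r) = N u := by
    intro ε
    set σ : Fin d → ℝ := fun i =>
      if h : (i : ℕ) / ℓ < n then sgn (ε ⟨(i : ℕ) / ℓ, h⟩) else 1 with hσ
    have hσpm : ∀ i, σ i = 1 ∨ σ i = -1 := by
      intro i
      simp only [hσ]
      split
      · unfold sgn; split
        · exact Or.inl rfl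
        · exact Or.inr rfl
      · exact Or.inl rfl
    have key : (∑ r, sgn (ε r) • xv r) = fun i => σ i * u i := by
      funext i
      rw [Finset.sum_apply]
      by_cases hi : (i : ℕ) < m
      · have hBd : B.card ≤ 4 ^ a * ℓ := hB
        have hdiv : (i : ℕ) / ℓ < n := by
          rw [Nat.div_lt_iff_lt_mul (by omega)]
          calc (i : ℕ) < m := hi
            _ ≤ 4 ^ a * ℓ := hBd
            _ = n * ℓ := by rw [hn]
        set r₀ : Fin n := ⟨(i : ℕ) / ℓ, hdiv⟩ with hr₀
        rw [Finset.sum_eq_single r₀]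
        · have hiB : i ∈ Bl r₀ := by
            simp [hBl, hr₀, hi]
          simp only [hxv, Pi.smul_apply, smul_eq_mul, if_pos hiB, hσ, hu, if_pos hi]
          rw [dif_pos hdiv]
        · intro r _ hr
          have : i ∉ Bl r := by
            simp only [hBl, Finset.mem_filter, Finset.mem_univ, true_and]
            rintro ⟨h1, -⟩
            exact hr (Fin.ext h1.symm)
          simp [hxv, this]
        · intro h; exact absurd (Finset.mem_univ r₀) h
      · have : ∀ r, xv r i = 0 := by
          intro r
          have : i ∉ Bl r := by
            simp [hBl, hi]
          simp [hxv, this]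
        simp only [Pi.smul_apply, smul_eq_mul, this, mul_zero]
        rw [Finset.sum_const_zero, hu]
        simp [hi]
    rw [key]
    exact hN_symm (Equiv.refl _) σ hσpm u
  -- apply type-2
  have h2 := hT2 n xv
  have hNu : 0 ≤ N u := N_nonneg hN_add hN_smul u
  have hlhs : Real.sqrt ((∑ ε : Fin n → Bool, N (∑ r, sgn (ε r) • xv r) ^ 2) / 2 ^ n)
      = N u := by
    have hconst : (∑ ε : Fin n → Bool, N (∑ r, sgn (ε r) • xv r) ^ 2)
        = (2 : ℝ) ^ n * (N u) ^ 2 := by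
      rw [Finset.sum_congr rfl (fun ε _ => by rw [hsum ε])]
      rw [Finset.sum_const, Finset.card_univ]
      have : Fintype.card (Fin n → Bool) = 2 ^ n := by
        simp [Fintype.card_fun]
      rw [this]
      push_cast
      ring
    have hdiv2 : (2 : ℝ) ^ n * (N u) ^ 2 / 2 ^ n = (N u) ^ 2 := by
      field_simp
    rw [hconst, hdiv2, Real.sqrt_sq hNu]
  rw [hlhs] at h2
  have hrhs : T * Real.sqrt (∑ r, N (xv r) ^ 2) ≤ 2 ^ a * T := by
    have hle : (∑ r, N (xv r) ^ 2) ≤ (n : ℝ) := by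
      calc (∑ r, N (xv r) ^ 2) ≤ ∑ _r : Fin n, (1 : ℝ) := by
            apply Finset.sum_le_sum
            intro r _
            have h1 := hsmall r
            have h0 := N_nonneg hN_add hN_smul (xv r)
            nlinarith
        _ = n := by simp
    have hsq : Real.sqrt (∑ r, N (xv r) ^ 2) ≤ Real.sqrt n := Real.sqrt_le_sqrt hle
    have hsn : Real.sqrt n = 2 ^ a := by
      have : (n : ℝ) = ((2 : ℝ) ^ a) ^ 2 := by
        rw [hn]
        push_cast
        calc (4 : ℝ) ^ a = ((2 : ℝ) ^ 2) ^ a := by norm_num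
          _ = ((2 : ℝ) ^ a) ^ 2 := by rw [← pow_mul, ← pow_mul, mul_comm]
      rw [this, Real.sqrt_sq (by positivity)]
    rw [hsn] at hsq
    calc T * Real.sqrt (∑ r, N (xv r) ^ 2) ≤ T * 2 ^ a := by
          apply mul_le_mul_of_nonneg_left hsq (by linarith)
      _ = 2 ^ a * T := by ring
  exact h2.trans hrhs
end Block

section L1
variable {d : ℕ} {N : (Fin d → ℝ) → ℝ}
  (hN_add : ∀ x y : Fin d → ℝ, N (x + y) ≤ N x + N y)
  (hN_smul : ∀ (c : ℝ) (x : Fin d → ℝ), N (c • x) = |c| * N x)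
  (hN_symm : ∀ (π : Equiv.Perm (Fin d)) (σ : Fin d → ℝ),
      (∀ i, σ i = 1 ∨ σ i = -1) →
      ∀ x : Fin d → ℝ, N (fun i => σ i * x (π i)) = N x)

include hN_symm in
lemma N_basis (hd : 0 < d) (he1 : N (fun i => if i = (⟨0, hd⟩ : Fin d) then 1 else 0) = 1)
    (a : Fin d) : N (fun k => if k = a then (1:ℝ) else 0) = 1 := by
  set i₀ : Fin d := ⟨0, hd⟩ with hi₀
  set π := Equiv.swap a i₀ with hπ
  have h := hN_symm π (fun _ => 1) (fun _ => Or.inl rfl)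
    (fun i => if i = i₀ then (1:ℝ) else 0)
  have heq : (fun k => (1:ℝ) * (if π k = i₀ then (1:ℝ) else 0))
      = fun k => if k = a then (1:ℝ) else 0 := by
    funext k
    rw [one_mul]
    have : π k = i₀ ↔ k = a := by
      rw [hπ]
      constructor
      · intro h'
        have := congrArg (Equiv.swap a i₀) h'
        rwa [Equiv.swap_apply_self, Equiv.swap_apply_right] at this
      · intro h'; rw [h']; exact Equiv.swap_apply_left a i₀
    by_cases hk : k = a
    · rw [if_pos (this.mpr hk), if_pos hk]
    · rw [if_neg (fun hh => hk (this.mp hh)), if_neg hk]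
  rw [heq] at h
  rw [h, he1]

include hN_add hN_smul hN_symm in
lemma N_le_l1 (hd : 0 < d) (he1 : N (fun i => if i = (⟨0, hd⟩ : Fin d) then 1 else 0) = 1)
    (z : Fin d → ℝ) : N z ≤ ∑ i, |z i| := by
  classical
  have hz : z = ∑ a, z a • (fun k => if k = a then (1:ℝ) else 0) := by
    funext k
    rw [Finset.sum_apply]
    simp only [Pi.smul_apply, smul_eq_mul, mul_ite, mul_one, mul_zero]
    rw [Finset.sum_ite_eq]
    simp
  calc N z ≤ ∑ a, N (z a • (fun k => if k = a then (1:ℝ) else 0)) := by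
        conv_lhs => rw [hz]
        exact N_sum hN_add hN_smul _ _
    _ = ∑ a, |z a| := by
        apply Finset.sum_congr rfl
        intro a _
        rw [hN_smul, N_basis hN_symm hd he1 a, mul_one]
end L1

set_option maxHeartbeats 1600000 in
/-- Let `d ≥ 4` and let `N` be a symmetric norm on `ℝ^d` with `N e₁ = 1`
whose type-2 constant is at most `T ≥ 1`. Fix `t ∈ (0,1]` and let `x ∈ ℝ^d` satisfy
`‖x‖_∞ ≤ t` and `‖x‖_2 ≤ m_X(t) = t·√(ℓ_X(t))`. Then `N x ≤ 3·T·log₂ d`. -/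
theorem stmt_0 (d : ℕ) (hd : 4 ≤ d) (N : (Fin d → ℝ) → ℝ) (T : ℝ) (hT : 1 ≤ T)
    (hN_add : ∀ x y : Fin d → ℝ, N (x + y) ≤ N x + N y)
    (hN_smul : ∀ (c : ℝ) (x : Fin d → ℝ), N (c • x) = |c| * N x)
    (hN_pos : ∀ x : Fin d → ℝ, x ≠ 0 → 0 < N x)
    (hN_symm : ∀ (π : Equiv.Perm (Fin d)) (σ : Fin d → ℝ),
      (∀ i, σ i = 1 ∨ σ i = -1) →
      ∀ x : Fin d → ℝ, N (fun i => σ i * x (π i)) = N x)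
    (he1 : N (fun i => if i = (⟨0, by omega⟩ : Fin d) then 1 else 0) = 1)
    (hT2 : ∀ (n : ℕ) (x : Fin n → Fin d → ℝ),
      Real.sqrt ((∑ ε : Fin n → Bool, N (∑ i, sgn (ε i) • x i) ^ 2) / 2 ^ n)
        ≤ T * Real.sqrt (∑ i, N (x i) ^ 2))
    (t : ℝ) (ht0 : 0 < t) (ht1 : t ≤ 1)
    (x : Fin d → ℝ)
    (hxinf : ∀ i, |x i| ≤ t)
    (hx2 : Real.sqrt (∑ i, x i ^ 2)
      ≤ t * Real.sqrt
          ((sSup {k : ℕ | k ≤ d ∧ N (fun i => if (i : ℕ) < k then t else 0) ≤ 1} : ℕ) : ℝ)) :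
    N x ≤ 3 * T * Real.logb 2 d := by
  classical
  have hd0 : 0 < d := by omega
  -- the set S and ℓ
  set S : Set ℕ := {k : ℕ | k ≤ d ∧ N (fun i => if (i : ℕ) < k then t else 0) ≤ 1} with hS
  set ℓ : ℕ := sSup S with hℓ
  have h1S : 1 ∈ S := by
    constructor
    · omega
    · have heqv : (fun i : Fin d => if (i : ℕ) < 1 then t else 0)
          = t • (fun i : Fin d => if i = (⟨0, hd0⟩ : Fin d) then (1:ℝ) else 0) := by
        funext i
        simp only [Pi.smul_apply, smul_eq_mul, mul_ite, mul_one, mul_zero]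
        by_cases h : (i : ℕ) < 1
        · rw [if_pos h, if_pos (Fin.ext (show (i:ℕ) = 0 by omega))]
        · rw [if_neg h, if_neg (fun hh => h (by rw [hh]; show (0:ℕ) < 1; omega))]
      rw [heqv, hN_smul, he1, mul_one, abs_of_pos ht0]
      exact ht1
  have hbdd : BddAbove S := ⟨d, fun k hk => hk.1⟩
  have hℓS : ℓ ∈ S := Nat.sSup_mem ⟨1, h1S⟩ hbdd
  have hℓpos : 1 ≤ ℓ := le_csSup hbdd h1S
  have hℓ1 : N (fun i => if (i : ℕ) < ℓ then t else 0) ≤ 1 := hℓS.2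
  -- ℓ2 bound in squared form
  have hx2' : (∑ i, x i ^ 2) ≤ t ^ 2 * ℓ := by
    have h0 : (0:ℝ) ≤ ∑ i, x i ^ 2 := Finset.sum_nonneg fun i _ => sq_nonneg _
    have h1 := Real.sq_sqrt h0
    have h2 : Real.sqrt (∑ i, x i ^ 2) ^ 2 ≤ (t * Real.sqrt ℓ) ^ 2 := by
      apply pow_le_pow_left₀ (Real.sqrt_nonneg _) hx2
    rw [h1, mul_pow, Real.sq_sqrt (Nat.cast_nonneg ℓ)] at h2
    exact h2
  -- replace x by |x|
  set y : Fin d → ℝ := fun i => |x i| with hy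
  have hNxy : N x = N y := by
    set σ : Fin d → ℝ := fun i => if x i < 0 then -1 else 1 with hσ
    have h := hN_symm (Equiv.refl _) σ
      (fun i => by by_cases h : x i < 0 <;> simp [hσ, h]) y
    have heq : (fun i => σ i * y (Equiv.refl _ i)) = x := by
      funext i
      simp only [hσ, hy, Equiv.refl_apply]
      by_cases h : x i < 0
      · rw [if_pos h, abs_of_neg h]; ring
      · rw [if_neg h, abs_of_nonneg (by linarith)]; ring
    rw [heq] at h
    exact h
  have hy0 : ∀ i, 0 ≤ y i := fun i => abs_nonneg _
  have hyt : ∀ i, y i ≤ t := fun i => hxinf i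
  have hysq : ∀ i, y i ^ 2 = x i ^ 2 := fun i => sq_abs _
  -- dyadic setup
  set J : ℕ := Nat.clog 2 d with hJ
  have hdJ : d ≤ 2 ^ J := Nat.le_pow_clog (by norm_num) d
  have hJ1 : 1 ≤ J := by
    by_contra h
    have : J = 0 := by omega
    rw [this] at hdJ
    omega
  have h2Jpos : (0:ℝ) < 2 ^ J := by positivity
  set nn : Fin d → ℕ := fun i => ⌊y i * 2 ^ J / t⌋₊ with hnn
  have hflo : ∀ i, (nn i : ℝ) ≤ y i * 2 ^ J / t := by
    intro i
    exact Nat.floor_le (by positivity)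
  have hfhi : ∀ i, y i * 2 ^ J / t < nn i + 1 := fun i => Nat.lt_floor_add_one _
  have hnle : ∀ i, (nn i : ℝ) ≤ 2 ^ J := by
    intro i
    refine (hflo i).trans ?_
    rw [div_le_iff₀ ht0]
    calc y i * 2 ^ J ≤ t * 2 ^ J := by
          apply mul_le_mul_of_nonneg_right (hyt i) (le_of_lt h2Jpos)
      _ = 2 ^ J * t := by ring
  have hnlt : ∀ i, nn i < 2 ^ (J + 1) := by
    intro i
    have h1 : (nn i : ℝ) < 2 ^ (J + 1) := by
      calc (nn i : ℝ) ≤ 2 ^ J := hnle i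
        _ < 2 ^ (J + 1) := by
            apply pow_lt_pow_right₀ (by norm_num) (by omega)
    exact_mod_cast h1
  -- the dyadic pieces
  set B : ℕ → Finset (Fin d) :=
    fun j => Finset.univ.filter (fun i => nn i / 2 ^ j % 2 = 1) with hB
  set f : ℕ → (Fin d → ℝ) :=
    fun j i => if i ∈ B j then t * 2 ^ j / 2 ^ J else 0 with hf
  set r : Fin d → ℝ := fun i => y i - (nn i : ℝ) * t / 2 ^ J with hr
  have hsum_f : ∀ i, (∑ j ∈ Finset.range (J + 1), f j i) = (nn i : ℝ) * t / 2 ^ J := by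
    intro i
    have hterm : ∀ j, f j i = ((nn i / 2 ^ j % 2 * 2 ^ j : ℕ) : ℝ) * t / 2 ^ J := by
      intro j
      have hbit : nn i / 2 ^ j % 2 = 0 ∨ nn i / 2 ^ j % 2 = 1 := by omega
      by_cases h : i ∈ B j
      · have h1 : nn i / 2 ^ j % 2 = 1 := by
          simpa [hB] using h
        simp only [hf, if_pos h, h1]
        push_cast
        ring
      · have h1 : nn i / 2 ^ j % 2 = 0 := by
          rcases hbit with h' | h'
          · exact h'
          · exact absurd (by simp [hB, h']) h
        simp only [hf, if_neg h, h1]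
        simp
    rw [Finset.sum_congr rfl (fun j _ => hterm j)]
    rw [← Finset.sum_div, ← Finset.sum_mul, ← Nat.cast_sum]
    rw [binsum (J + 1) (nn i) (hnlt i)]
  have hdecomp : y = (∑ j ∈ Finset.range (J + 1), f j) + r := by
    funext i
    rw [Pi.add_apply, Finset.sum_apply, hsum_f i, hr]
    ring
  -- bound each piece
  have hpiece : ∀ j ∈ Finset.range (J + 1), N (f j) ≤ T := by
    intro j hj
    have hjJ : j ≤ J := by
      rw [Finset.mem_range] at hj; omega
    -- cardinality bound
    have hcard : (B j).card ≤ 4 ^ (J - j) * ℓ := by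
      have hval : ∀ i ∈ B j, (t * 2 ^ j / 2 ^ J) ^ 2 ≤ x i ^ 2 := by
        intro i hi
        have hbit : nn i / 2 ^ j % 2 = 1 := by simpa [hB] using hi
        have h2j : 2 ^ j ≤ nn i := by
          have : 1 ≤ nn i / 2 ^ j :=
            Nat.one_le_iff_ne_zero.mpr (fun h0 => by rw [h0] at hbit; simp at hbit)
          calc 2 ^ j = 1 * 2 ^ j := by ring
            _ ≤ (nn i / 2 ^ j) * 2 ^ j := by
                exact Nat.mul_le_mul_right _ this
            _ ≤ nn i := Nat.div_mul_le_self _ _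
        have hylb : t * 2 ^ j / 2 ^ J ≤ y i := by
          have h1 : (nn i : ℝ) * t / 2 ^ J ≤ y i := by
            rw [div_le_iff₀ h2Jpos]
            have := hflo i
            rw [le_div_iff₀ ht0] at this
            linarith
          have h2j' : (2:ℝ) ^ j ≤ (nn i : ℝ) := by exact_mod_cast h2j
          have h2 : t * 2 ^ j / 2 ^ J ≤ (nn i : ℝ) * t / 2 ^ J := by
            have hmm : t * 2 ^ j ≤ (nn i : ℝ) * t := by
              nlinarith [mul_le_mul_of_nonneg_right h2j' (le_of_lt ht0)]
            exact div_le_div_of_nonneg_right hmm (le_of_lt h2Jpos)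
          linarith
        calc (t * 2 ^ j / 2 ^ J) ^ 2 ≤ y i ^ 2 := by
              apply pow_le_pow_left₀ (by positivity) hylb
          _ = x i ^ 2 := hysq i
      have hsum1 : ((B j).card : ℝ) * (t * 2 ^ j / 2 ^ J) ^ 2 ≤ ∑ i ∈ B j, x i ^ 2 := by
        have := Finset.card_nsmul_le_sum (B j) (fun i => x i ^ 2) ((t * 2 ^ j / 2 ^ J) ^ 2) hval
        simpa [nsmul_eq_mul] using this
      have hsum2 : (∑ i ∈ B j, x i ^ 2) ≤ ∑ i, x i ^ 2 :=
        Finset.sum_le_sum_of_subset_of_nonneg (Finset.subset_univ _)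
          (fun i _ _ => sq_nonneg _)
      have hsum3 : ((B j).card : ℝ) * (t * 2 ^ j / 2 ^ J) ^ 2 ≤ t ^ 2 * ℓ := by
        linarith
      have hA : ((2:ℝ) ^ j) ^ 2 * (4:ℝ) ^ (J - j) = ((2:ℝ) ^ J) ^ 2 := by
        rw [show (4:ℝ) = 2 ^ (2:ℕ) by norm_num, ← pow_mul, ← pow_mul, ← pow_mul, ← pow_add]
        congr 1
        omega
      have hq : (t * 2 ^ j / 2 ^ J) ^ 2 * (4:ℝ) ^ (J - j) = t ^ 2 := by
        rw [div_pow, mul_pow, div_mul_eq_mul_div, mul_assoc, hA, mul_div_assoc,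
          div_self (by positivity), mul_one]
      have h5 : ((B j).card : ℝ) * t ^ 2 ≤ t ^ 2 * ℓ * 4 ^ (J - j) := by
        calc ((B j).card : ℝ) * t ^ 2
            = (((B j).card : ℝ) * (t * 2 ^ j / 2 ^ J) ^ 2) * 4 ^ (J - j) := by
              rw [mul_assoc, hq]
          _ ≤ (t ^ 2 * ℓ) * 4 ^ (J - j) :=
              mul_le_mul_of_nonneg_right hsum3 (by positivity)
          _ = t ^ 2 * ℓ * 4 ^ (J - j) := by ring
      have h6 : ((B j).card : ℝ) ≤ (4:ℝ) ^ (J - j) * ℓ := by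
        have ht2 : (0:ℝ) < t ^ 2 := by positivity
        nlinarith
      exact_mod_cast h6
    have hfsmul : f j = ((2:ℝ) ^ j / 2 ^ J) • (fun i => if i ∈ B j then t else 0) := by
      funext i
      simp only [hf, Pi.smul_apply, smul_eq_mul, mul_ite, mul_zero]
      by_cases h : i ∈ B j
      · rw [if_pos h, if_pos h]; ring
      · rw [if_neg h, if_neg h]
    have hNblock := N_block hN_add hN_smul hN_symm hT2 hT ht0 hℓpos hℓ1 (J - j) (B j) hcard
    rw [hfsmul, hN_smul]
    have habs : |(2:ℝ) ^ j / 2 ^ J| = 2 ^ j / 2 ^ J := by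
      rw [abs_of_pos (by positivity)]
    rw [habs]
    have h2pow : (2:ℝ) ^ j * 2 ^ (J - j) = 2 ^ J := by
      rw [← pow_add]
      congr 1
      omega
    calc (2:ℝ) ^ j / 2 ^ J * N (fun i => if i ∈ B j then t else 0)
        ≤ (2:ℝ) ^ j / 2 ^ J * (2 ^ (J - j) * T) := by
          apply mul_le_mul_of_nonneg_left hNblock (by positivity)
      _ = T := by
          rw [div_mul_eq_mul_div, ← mul_assoc, h2pow, mul_comm ((2:ℝ)^J) T, mul_div_assoc,
            div_self (ne_of_gt h2Jpos), mul_one]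
  -- bound remainder
  have hrem : N r ≤ T := by
    have h1 : N r ≤ ∑ i, |r i| := N_le_l1 hN_add hN_smul hN_symm hd0 he1 r
    have h2 : ∀ i, |r i| ≤ t / 2 ^ J := by
      intro i
      rw [abs_le]
      constructor
      · have := hflo i
        rw [le_div_iff₀ ht0] at this
        rw [hr]
        have h3 : (nn i : ℝ) * t / 2 ^ J ≤ y i := by
          rw [div_le_iff₀ h2Jpos]; linarith
        have h4 : (0:ℝ) < t / 2 ^ J := by positivity
        simp only
        linarith
      · have := hfhi i
        rw [div_lt_iff₀ ht0] at this
        rw [hr]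
        simp only
        rw [sub_le_iff_le_add]
        rw [← add_div, le_div_iff₀ h2Jpos]
        nlinarith [this]
    calc N r ≤ ∑ i, |r i| := h1
      _ ≤ ∑ _i : Fin d, t / 2 ^ J := Finset.sum_le_sum (fun i _ => h2 i)
      _ = d * (t / 2 ^ J) := by rw [Finset.sum_const, Finset.card_univ]; simp
      _ ≤ t := by
          rw [mul_div_assoc']
          rw [div_le_iff₀ h2Jpos]
          have : (d:ℝ) ≤ 2 ^ J := by exact_mod_cast hdJ
          nlinarith
      _ ≤ 1 := ht1
      _ ≤ T := hT
  -- put everything together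
  have hmain : N x ≤ (J + 2) * T := by
    rw [hNxy, hdecomp]
    calc N ((∑ j ∈ Finset.range (J + 1), f j) + r)
        ≤ N (∑ j ∈ Finset.range (J + 1), f j) + N r := hN_add _ _
      _ ≤ (∑ j ∈ Finset.range (J + 1), N (f j)) + N r := by
          have := N_sum hN_add hN_smul (Finset.range (J + 1)) f
          linarith
      _ ≤ (∑ _j ∈ Finset.range (J + 1), T) + T := by
          have := Finset.sum_le_sum hpiece
          linarith [hrem]
      _ = (J + 1) * T + T := by rw [Finset.sum_const, Finset.card_range]; simp
      _ = (J + 2) * T := by ring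
  -- final numeric bound
  have hlog2 : (2:ℝ) ≤ Real.logb 2 d := by
    have h4 : Real.logb 2 4 = 2 := by
      rw [show (4:ℝ) = 2 ^ (2:ℕ) by norm_num, Real.logb_pow,
        Real.logb_self_eq_one (by norm_num)]
      norm_num
    have h5 : Real.logb 2 4 ≤ Real.logb 2 d :=
      Real.logb_le_logb_of_le (by norm_num) (by norm_num) (by exact_mod_cast hd)
    linarith [h4 ▸ h5]
  have hJlog : (J:ℝ) ≤ Real.logb 2 d + 1 := by
    have hpow : 2 ^ (J - 1) < d := Nat.pow_pred_clog_lt_self (by norm_num) (by omega)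
    have h1 : Real.logb 2 ((2:ℝ) ^ (J - 1)) < Real.logb 2 d := by
      apply Real.logb_lt_logb (b := 2) (by norm_num) (by positivity)
      exact_mod_cast hpow
    rw [Real.logb_pow, Real.logb_self_eq_one (by norm_num)] at h1
    rw [mul_one] at h1
    have hc : ((J - 1 : ℕ) : ℝ) = (J : ℝ) - 1 := by
      rw [Nat.cast_sub hJ1]
      norm_num
    rw [hc] at h1
    linarith
  have hT0 : (0:ℝ) < T := by linarith
  calc N x ≤ (J + 2) * T := hmain
    _ ≤ 3 * T * Real.logb 2 d := by nlinarith
end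

section
/- Let ‖·‖_X be a symmetric norm on ℝ^d with ‖e₁‖_X = 1 whose type-2 constant is at most T for some T ≥ 1. Fix t ∈ (0,1] and an integer j ≥ 0, and let v ∈ ℝ^d be a vector each of whose entries lies in {0, t·2^{−j}, −t·2^{−j}}, with at most ℓ_X(t)·2^{2j} nonzero entries. Then ‖v‖_X ≤ T. -/
open Finset


section
variable {d : ℕ} {N : (Fin d → ℝ) → ℝ}
  (hN_add : ∀ x y : Fin d → ℝ, N (x + y) ≤ N x + N y)
  (hN_smul : ∀ (c : ℝ) (x : Fin d → ℝ), N (c • x) = |c| * N x)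
  (hN_symm : ∀ (π : Equiv.Perm (Fin d)) (σ : Fin d → ℝ),
      (∀ i, σ i = 1 ∨ σ i = -1) →
      ∀ x : Fin d → ℝ, N (fun i => σ i * x (π i)) = N x)

include hN_add hN_smul hN_symm
set_option linter.unusedSectionVars false

lemma flip_eq
    (σ : Fin d → ℝ) (hσ : ∀ i, σ i = 1 ∨ σ i = -1) (x : Fin d → ℝ) :
    N (fun i => σ i * x i) = N x := by
  simpa using hN_symm (Equiv.refl _) σ hσ x

lemma zero_one (a : Fin d) (y : Fin d → ℝ) :
    N (fun i => if i = a then 0 else y i) ≤ N y := by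
  set σ : Fin d → ℝ := fun i => if i = a then -1 else 1 with hσdef
  have hσ : ∀ i, σ i = 1 ∨ σ i = -1 := by
    intro i; by_cases h : i = a <;> simp [hσdef, h]
  have h1 : N (fun i => σ i * y i) = N y := flip_eq hN_add hN_smul hN_symm σ hσ y
  have h2 : (fun i => if i = a then (0:ℝ) else y i)
      = (1/2 : ℝ) • (y + fun i => σ i * y i) := by
    funext i
    by_cases h : i = a <;> simp [hσdef, h] <;> ring
  calc N (fun i => if i = a then (0:ℝ) else y i)
      = |1/2| * N (y + fun i => σ i * y i) := by rw [h2, hN_smul]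
    _ ≤ |1/2| * (N y + N (fun i => σ i * y i)) := by
        have := hN_add y (fun i => σ i * y i)
        have h05 : (0:ℝ) ≤ |1/2| := abs_nonneg _
        nlinarith
    _ = N y := by rw [h1]; rw [abs_of_pos (by norm_num)]; ring

lemma zero_set (S : Finset (Fin d)) (x : Fin d → ℝ) :
    N (fun i => if i ∈ S then 0 else x i) ≤ N x := by
  classical
  induction S using Finset.induction_on with
  | empty => simp
  | @insert a S ha ih =>
    have heq : (fun i => if i ∈ insert a S then (0:ℝ) else x i)
        = fun i => if i = a then 0 else (if i ∈ S then 0 else x i) := by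
      funext i
      by_cases h : i = a
      · simp [h]
      · by_cases h2 : i ∈ S <;> simp [h, h2]
    rw [heq]
    exact le_trans (zero_one hN_add hN_smul hN_symm a _) ih

lemma ind_le (t : ℝ) (k l : ℕ) (hkl : k ≤ l) :
    N (fun i : Fin d => if (i : ℕ) < k then t else 0)
      ≤ N (fun i : Fin d => if (i : ℕ) < l then t else 0) := by
  classical
  have heq : (fun i : Fin d => if (i : ℕ) < k then t else 0)
      = fun i => if i ∈ Finset.univ.filter (fun i : Fin d => k ≤ (i : ℕ)) then 0
          else (if (i : ℕ) < l then t else 0) := by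
    funext i
    by_cases h : (i : ℕ) < k
    · simp only [Finset.mem_filter, Finset.mem_univ, true_and]
      rw [if_pos h, if_neg (by omega), if_pos (by omega)]
    · simp only [Finset.mem_filter, Finset.mem_univ, true_and]
      rw [if_neg h, if_pos (by omega)]
  rw [heq]
  exact zero_set hN_add hN_smul hN_symm _ _

lemma subset_eq (t : ℝ) (S : Finset (Fin d)) (τ : Fin d → ℝ)
    (hτ : ∀ i, τ i = 1 ∨ τ i = -1) :
    N (fun i => if i ∈ S then τ i * t else 0)
      = N (fun i : Fin d => if (i : ℕ) < S.card then t else 0) := by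
  classical
  set k := S.card with hk
  have hkd : k ≤ d := by
    have := Finset.card_le_univ S
    simpa using this
  have hcards : Fintype.card {x // x ∈ S} = Fintype.card {x : Fin d // (x : ℕ) < k} := by
    rw [Fintype.card_coe, Fintype.card_fin_lt_of_le hkd]
  have e : {x // x ∈ S} ≃ {x : Fin d // (x : ℕ) < k} := Fintype.equivOfCardEq hcards
  have heq : (fun i => if i ∈ S then τ i * t else 0)
      = fun i => τ i * (fun i : Fin d => if (i : ℕ) < k then t else 0) (e.extendSubtype i) := by
    funext i
    by_cases h : i ∈ S
    · have := e.extendSubtype_mem i h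
      simp only [h, if_pos, this, if_true]
    · have := e.extendSubtype_not_mem i h
      simp only [h, if_false, this, if_neg, mul_zero]
  rw [heq]
  exact hN_symm (e.extendSubtype) τ hτ (fun i : Fin d => if (i : ℕ) < k then t else 0)

end


/-- Let `N` be a symmetric norm on `ℝ^d` with `N e₁ = 1` whose type-2
constant is at most `T ≥ 1`. Fix `t ∈ (0,1]` and an integer `j ≥ 0`, and let `v ∈ ℝ^d`
have every entry in `{0, t·2^{-j}, -t·2^{-j}}` with at most `ℓ_X(t)·2^{2j}` nonzero
entries. Then `N v ≤ T`. -/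
theorem stmt_1 (d : ℕ) (hd : 1 ≤ d) (N : (Fin d → ℝ) → ℝ) (T : ℝ) (hT : 1 ≤ T)
    (hN_add : ∀ x y : Fin d → ℝ, N (x + y) ≤ N x + N y)
    (hN_smul : ∀ (c : ℝ) (x : Fin d → ℝ), N (c • x) = |c| * N x)
    (hN_pos : ∀ x : Fin d → ℝ, x ≠ 0 → 0 < N x)
    (hN_symm : ∀ (π : Equiv.Perm (Fin d)) (σ : Fin d → ℝ),
      (∀ i, σ i = 1 ∨ σ i = -1) →
      ∀ x : Fin d → ℝ, N (fun i => σ i * x (π i)) = N x)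
    (he1 : N (fun i => if i = (⟨0, by omega⟩ : Fin d) then 1 else 0) = 1)
    (hT2 : ∀ (n : ℕ) (x : Fin n → Fin d → ℝ),
      Real.sqrt ((∑ ε : Fin n → Bool, N (∑ i, sgn (ε i) • x i) ^ 2) / 2 ^ n)
        ≤ T * Real.sqrt (∑ i, N (x i) ^ 2))
    (t : ℝ) (ht0 : 0 < t) (ht1 : t ≤ 1) (j : ℕ)
    (v : Fin d → ℝ)
    (hv : ∀ i, v i = 0 ∨ v i = t / 2 ^ j ∨ v i = -(t / 2 ^ j))
    (hsupp : (Finset.univ.filter (fun i => v i ≠ 0)).card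
      ≤ (sSup {k : ℕ | k ≤ d ∧ N (fun i => if (i : ℕ) < k then t else 0) ≤ 1}) * 2 ^ (2 * j)) :
    N v ≤ T := by
  classical
  have hN0 : N 0 = 0 := by simpa using hN_smul 0 0
  have hNnn : ∀ x : Fin d → ℝ, 0 ≤ N x := by
    intro x
    by_cases hx : x = 0
    · simp [hx, hN0]
    · exact (hN_pos x hx).le
  set A : Set ℕ := {k : ℕ | k ≤ d ∧ N (fun i => if (i : ℕ) < k then t else 0) ≤ 1} with hA
  set ℓ : ℕ := sSup A with hℓ
  -- 1 ∈ A
  have h1A : 1 ∈ A := by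
    constructor
    · exact hd
    · have heq : (fun i : Fin d => if (i : ℕ) < 1 then t else 0)
          = t • (fun i => if i = (⟨0, by omega⟩ : Fin d) then (1:ℝ) else 0) := by
        funext i
        by_cases h : (i : ℕ) = 0
        · rw [if_pos (by omega), Pi.smul_apply, if_pos (by exact Fin.ext h), smul_eq_mul,
            mul_one]
        · rw [if_neg (by omega), Pi.smul_apply,
            if_neg (by intro hc; exact h (by rw [hc])), smul_eq_mul, mul_zero]
      rw [heq, hN_smul, he1, mul_one, abs_of_pos ht0]
      exact ht1
  have hbdd : BddAbove A := ⟨d, fun k hk => hk.1⟩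
  have hℓA : ℓ ∈ A := Nat.sSup_mem ⟨1, h1A⟩ hbdd
  have hℓ1 : 1 ≤ ℓ := le_csSup hbdd h1A
  have hℓN : N (fun i : Fin d => if (i : ℕ) < ℓ then t else 0) ≤ 1 := hℓA.2
  -- the key subset bound
  have hF : ∀ (S : Finset (Fin d)) (τ : Fin d → ℝ), S.card ≤ ℓ →
      (∀ i, τ i = 1 ∨ τ i = -1) →
      N (fun i => if i ∈ S then τ i * t else 0) ≤ 1 := by
    intro S τ hcard hτ
    calc N (fun i => if i ∈ S then τ i * t else 0)
        = N (fun i : Fin d => if (i : ℕ) < S.card then t else 0) :=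
          subset_eq hN_add hN_smul hN_symm t S τ hτ
      _ ≤ N (fun i : Fin d => if (i : ℕ) < ℓ then t else 0) :=
          ind_le hN_add hN_smul hN_symm t _ _ hcard
      _ ≤ 1 := hℓN
  -- setup
  set S : Finset (Fin d) := Finset.univ.filter (fun i => v i ≠ 0) with hS
  set m : ℕ := S.card with hm
  set n : ℕ := 2 ^ (2 * j) with hn
  have hmn : m ≤ ℓ * n := hsupp
  set e : {x // x ∈ S} ≃ Fin m := S.equivFin with he
  have hℓpos : 0 < ℓ := hℓ1
  set grp : Fin d → ℕ := fun i => if h : i ∈ S then ((e ⟨i, h⟩ : Fin m) : ℕ) / ℓ else 0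
    with hgrp
  have hgrp_lt : ∀ i, i ∈ S → grp i < n := by
    intro i hi
    rw [hgrp]
    simp only [hi, dif_pos]
    rw [Nat.div_lt_iff_lt_mul hℓpos]
    calc ((e ⟨i, hi⟩ : Fin m) : ℕ) < m := (e ⟨i, hi⟩).isLt
      _ ≤ n * ℓ := by rw [mul_comm]; exact hmn
  set τ : Fin d → ℝ := fun i => if 0 ≤ v i then 1 else -1 with hτdef
  have hτ : ∀ i, τ i = 1 ∨ τ i = -1 := by
    intro i; by_cases h : 0 ≤ v i <;> simp [hτdef, h]
  have h2jne : ((2:ℝ) ^ j) ≠ 0 := by positivity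
  have hτv : ∀ i, i ∈ S → (2:ℝ) ^ j * v i = τ i * t := by
    intro i hi
    have hvi : v i ≠ 0 := by
      rw [hS] at hi; simpa using hi
    rcases hv i with h | h | h
    · exact absurd h hvi
    · have hpos : 0 ≤ v i := by rw [h]; positivity
      rw [hτdef]; simp only [hpos, if_pos]
      rw [h]; field_simp
    · have hneg : ¬ (0 ≤ v i) := by
        rw [h]; push_neg
        have : 0 < t / 2 ^ j := by positivity
        linarith
      rw [hτdef]; simp only [hneg, if_neg, if_false]
      rw [h]; field_simp
  set u : Fin n → Fin d → ℝ :=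
    fun r i => if i ∈ S ∧ grp i = (r : ℕ) then (2:ℝ) ^ j * v i else 0 with hu
  -- each u r has norm at most 1
  have hu1 : ∀ r : Fin n, N (u r) ≤ 1 := by
    intro r
    set Sr : Finset (Fin d) := S.filter (fun i => grp i = (r : ℕ)) with hSr
    have hcard : Sr.card ≤ ℓ := by
      have hmaps : ∀ i ∈ Sr, (if h : i ∈ S then ((e ⟨i, h⟩ : Fin m) : ℕ) else 0)
          ∈ Finset.Ico ((r : ℕ) * ℓ) ((r : ℕ) * ℓ + ℓ) := by
        intro i hi
        rw [hSr, Finset.mem_filter] at hi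
        obtain ⟨hiS, hig⟩ := hi
        simp only [hiS, dif_pos]
        rw [hgrp] at hig
        simp only [hiS, dif_pos] at hig
        have hdm := Nat.div_add_mod ((e ⟨i, hiS⟩ : Fin m) : ℕ) ℓ
        rw [hig] at hdm
        have hmod : ((e ⟨i, hiS⟩ : Fin m) : ℕ) % ℓ < ℓ := Nat.mod_lt _ hℓpos
        rw [Finset.mem_Ico, mul_comm ((r : ℕ)) ℓ]
        omega
      have hinj : Set.InjOn (fun i => if h : i ∈ S then ((e ⟨i, h⟩ : Fin m) : ℕ) else 0)
          Sr := by
        intro i1 h1 i2 h2 h12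
        have h1S : i1 ∈ S := (Finset.mem_filter.mp h1).1
        have h2S : i2 ∈ S := (Finset.mem_filter.mp h2).1
        simp only [h1S, h2S, dif_pos] at h12
        have : e ⟨i1, h1S⟩ = e ⟨i2, h2S⟩ := Fin.ext h12
        have := e.injective this
        exact congrArg Subtype.val this
      calc Sr.card ≤ (Finset.Ico ((r : ℕ) * ℓ) ((r : ℕ) * ℓ + ℓ)).card :=
            Finset.card_le_card_of_injOn _ hmaps hinj
        _ = ℓ := by rw [Nat.card_Ico]; omega
    have heq : u r = fun i => if i ∈ Sr then τ i * t else 0 := by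
      funext i
      by_cases h : i ∈ S ∧ grp i = (r : ℕ)
      · rw [hu]
        simp only [h, if_pos]
        rw [if_pos (show i ∈ Sr from Finset.mem_filter.mpr ⟨h.1, h.2⟩)]
        exact hτv i h.1
      · rw [hu]
        simp only [h, if_neg, if_false]
        rw [if_neg (show i ∉ Sr from fun hc => h (Finset.mem_filter.mp hc))]
    rw [heq]
    exact hF Sr τ hcard hτ
  -- sign invariance
  have hsgn_pm : ∀ b : Bool, sgn b = 1 ∨ sgn b = -1 := by
    intro b; cases b <;> simp [sgn]
  have hsgn : ∀ ε : Fin n → Bool, N (∑ r, sgn (ε r) • u r) = N ((2:ℝ) ^ j • v) := by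
    intro ε
    set σε : Fin d → ℝ :=
      fun i => if h : i ∈ S then sgn (ε ⟨grp i, hgrp_lt i h⟩) else 1 with hσε
    have hσpm : ∀ i, σε i = 1 ∨ σε i = -1 := by
      intro i
      rw [hσε]
      by_cases h : i ∈ S
      · simp only [h, dif_pos]; exact hsgn_pm _
      · simp [h]
    have heq : (∑ r, sgn (ε r) • u r) = fun i => σε i * ((2:ℝ) ^ j • v) i := by
      funext i
      rw [Finset.sum_apply]
      by_cases hi : i ∈ S
      · have hg : grp i < n := hgrp_lt i hi
        rw [Finset.sum_eq_single (⟨grp i, hg⟩ : Fin n)]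
        · rw [hu, hσε]
          simp [hi]
        · intro r _ hr
          rw [hu]
          simp only [Pi.smul_apply, smul_eq_mul]
          rw [if_neg (by intro hc; exact hr (by apply Fin.ext; simp [← hc.2]))]
          ring
        · intro hc; exact absurd (Finset.mem_univ _) hc
      · have hvi : v i = 0 := by
          rw [hS] at hi; simpa using hi
        rw [Finset.sum_eq_zero]
        · simp [hvi]
        · intro r _
          rw [hu]
          simp [hi]
    rw [heq]
    exact flip_eq hN_add hN_smul hN_symm σε hσpm _
  -- apply the type-2 inequality
  have key := hT2 n u
  have hQ : (0:ℝ) ≤ N ((2:ℝ) ^ j • v) := hNnn _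
  have hLHS : Real.sqrt ((∑ ε : Fin n → Bool, N (∑ r, sgn (ε r) • u r) ^ 2) / 2 ^ n)
      = N ((2:ℝ) ^ j • v) := by
    have hsum2 : (∑ ε : Fin n → Bool, N (∑ r, sgn (ε r) • u r) ^ 2)
        = (2:ℝ) ^ n * N ((2:ℝ) ^ j • v) ^ 2 := by
      rw [Finset.sum_congr rfl (fun ε _ => by rw [hsgn ε])]
      rw [Finset.sum_const, Finset.card_univ]
      rw [nsmul_eq_mul]
      congr 1
      rw [Fintype.card_fun, Fintype.card_bool, Fintype.card_fin]
      push_cast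
      ring
    rw [hsum2, mul_div_cancel_left₀ _ (show ((2:ℝ) ^ n) ≠ 0 by positivity), Real.sqrt_sq hQ]
  have hRHS : Real.sqrt (∑ r, N (u r) ^ 2) ≤ (2:ℝ) ^ j := by
    have hb : (∑ r : Fin n, N (u r) ^ 2) ≤ (n : ℝ) := by
      calc (∑ r : Fin n, N (u r) ^ 2) ≤ ∑ _r : Fin n, (1:ℝ) := by
            apply Finset.sum_le_sum
            intro r _
            have := hNnn (u r)
            nlinarith [hu1 r]
        _ = (n : ℝ) := by simp
    calc Real.sqrt (∑ r, N (u r) ^ 2) ≤ Real.sqrt (n : ℝ) := Real.sqrt_le_sqrt hb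
      _ = (2:ℝ) ^ j := by
          rw [hn]
          push_cast
          rw [two_mul, pow_add, ← sq]
          exact Real.sqrt_sq (by positivity)
  have hfinal : N ((2:ℝ) ^ j • v) ≤ T * (2:ℝ) ^ j := by
    calc N ((2:ℝ) ^ j • v) = _ := hLHS.symm
      _ ≤ T * Real.sqrt (∑ r, N (u r) ^ 2) := key
      _ ≤ T * (2:ℝ) ^ j := by
          apply mul_le_mul_of_nonneg_left hRHS (by linarith)
  rw [hN_smul, abs_of_pos (by positivity)] at hfinal
  have h2j : (0:ℝ) < 2 ^ j := by positivity
  calc N v = (2:ℝ) ^ j * N v / 2 ^ j := by field_simp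
    _ ≤ T * 2 ^ j / 2 ^ j := by gcongr
    _ = T := by field_simp
end

section
/- There is an absolute constant C > 0 with the following property. Let ‖·‖_X be a norm on ℝ^d and let x₁,…,x_n ∈ ℝ^d satisfy 1 ≤ ‖xᵢ‖_X ≤ 2 for all i; write x̂ᵢ = xᵢ/‖xᵢ‖_X, L₁ = Σᵢ‖xᵢ‖_X, L₂ = (Σᵢ‖xᵢ‖_X²)^{1/2}, and define t₂(x) > 0 by (𝔼_{ε∼Unif{−1,1}^n} ‖Σᵢ εᵢxᵢ‖_X²)^{1/2} = t₂(x)·L₂. Fix ε₀ > 0, let h : ℝ^d → ℝ satisfy (1/(2L₁))·Σᵢ ‖xᵢ‖_X·(h(x̂ᵢ)² + h(−x̂ᵢ)²) = 1, and for z ∈ {−1,1}^n set S_h(z) = (ε₀/(2·t₂(x)·L₂))·Σᵢ zᵢ‖xᵢ‖_X·(h(x̂ᵢ) − h(−x̂ᵢ)). Then for every real r ≥ 2 and every subset Z ⊆ {−1,1}^n with |Z| ≥ 2^n/r, one has (1/|Z|)·Σ_{z∈Z} |S_h(z)| ≤ C·ε₀·√(ln r)/t₂(x). -/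
open Finset

lemma mgf_bound (n : ℕ) (b : Fin n → ℝ) (lam : ℝ) :
    ∑ z : Fin n → Bool, Real.exp (lam * ∑ i, sgn (z i) * b i)
      ≤ 2 ^ n * Real.exp (lam ^ 2 * (∑ i, (b i) ^ 2) / 2) := by
  have h1 : ∑ z : Fin n → Bool, Real.exp (lam * ∑ i, sgn (z i) * b i)
      = ∏ i, ∑ y : Bool, Real.exp (lam * (sgn y * b i)) := by
    rw [Finset.prod_univ_sum, Fintype.piFinset_univ]
    refine Finset.sum_congr rfl fun z _ => ?_
    rw [← Real.exp_sum, ← Finset.mul_sum]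
  rw [h1]
  have h2 : ∀ i : Fin n, ∑ y : Bool, Real.exp (lam * (sgn y * b i))
      ≤ 2 * Real.exp ((lam * b i) ^ 2 / 2) := by
    intro i
    have : ∑ y : Bool, Real.exp (lam * (sgn y * b i))
        = 2 * Real.cosh (lam * b i) := by
      rw [Fintype.sum_bool, Real.cosh_eq]
      simp [sgn]
      ring
    rw [this]
    have := Real.cosh_le_exp_half_sq (lam * b i)
    nlinarith [this]
  calc ∏ i, ∑ y : Bool, Real.exp (lam * (sgn y * b i))
      ≤ ∏ i : Fin n, 2 * Real.exp ((lam * b i) ^ 2 / 2) := by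
        refine Finset.prod_le_prod (fun i _ => ?_) (fun i _ => h2 i)
        positivity
    _ = 2 ^ n * Real.exp (lam ^ 2 * (∑ i, (b i) ^ 2) / 2) := by
        rw [Finset.prod_mul_distrib, Finset.prod_const, ← Real.exp_sum]
        simp only [Finset.card_univ, Fintype.card_fin]
        congr 1
        rw [← Finset.sum_div, Finset.mul_sum]
        congr 1
        congr 1
        refine Finset.sum_congr rfl fun i _ => by ring

set_option maxHeartbeats 1600000 in
lemma avg_bound (n : ℕ) (b : Fin n → ℝ) (r : ℝ) (hr : 2 ≤ r)
    (Z : Finset (Fin n → Bool)) (hZ : (2:ℝ) ^ n / r ≤ (Z.card : ℝ)) :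
    ∑ z ∈ Z, |∑ i, sgn (z i) * b i|
      ≤ (Z.card : ℝ) * (4 * Real.sqrt (Real.log r) * Real.sqrt (∑ i, (b i) ^ 2)) := by
  have hrpos : (0:ℝ) < r := by linarith
  have hB2 : (0:ℝ) ≤ ∑ i, (b i) ^ 2 := by positivity
  rcases eq_or_lt_of_le hB2 with hB0 | hBpos
  · have hb : ∀ i ∈ Finset.univ, b i = 0 := by
      intro i hi
      have := (Finset.sum_eq_zero_iff_of_nonneg (fun i _ => sq_nonneg (b i))).1 hB0.symm i hi
      exact pow_eq_zero_iff (by norm_num) |>.1 this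
    have hS : ∀ z : Fin n → Bool, (∑ i, sgn (z i) * b i) = 0 := fun z =>
      Finset.sum_eq_zero fun i hi => by rw [hb i hi, mul_zero]
    have hzero : ∑ z ∈ Z, |∑ i, sgn (z i) * b i| = 0 :=
      Finset.sum_eq_zero fun z _ => by rw [hS z, abs_zero]
    rw [hzero]
    positivity
  · obtain ⟨B2, hB2def⟩ : ∃ B2 : ℝ, B2 = ∑ i, (b i) ^ 2 := ⟨_, rfl⟩
    rw [← hB2def] at hBpos ⊢
    obtain ⟨σ, hσdef⟩ : ∃ σ : ℝ, σ = Real.sqrt B2 := ⟨_, rfl⟩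
    rw [← hσdef]
    have hσpos : 0 < σ := hσdef ▸ Real.sqrt_pos.2 hBpos
    have hσsq : σ ^ 2 = B2 := hσdef ▸ Real.sq_sqrt (le_of_lt hBpos)
    have hlog2 : (0.6931471803 : ℝ) < Real.log 2 := Real.log_two_gt_d9
    have hlogr : Real.log 2 ≤ Real.log r := Real.log_le_log (by norm_num) hr
    obtain ⟨L, hLdef⟩ : ∃ L : ℝ, L = Real.log (2 * r) := ⟨_, rfl⟩
    have hL : L = Real.log 2 + Real.log r := by
      rw [hLdef]; exact Real.log_mul (by norm_num) (by linarith)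
    have hL1 : (1:ℝ) ≤ L := by rw [hL]; linarith
    have hLle : L ≤ 2 * Real.log r := by rw [hL]; linarith
    obtain ⟨v, hvdef⟩ : ∃ v : ℝ, v = Real.sqrt (2 * L) := ⟨_, rfl⟩
    have hvpos : 0 < v := hvdef ▸ Real.sqrt_pos.2 (by linarith)
    have hvsq : v ^ 2 = 2 * L := hvdef ▸ Real.sq_sqrt (by linarith)
    have hv1 : 1 ≤ v := by nlinarith
    obtain ⟨lam, hlamdef⟩ : ∃ lam : ℝ, lam = v / σ := ⟨_, rfl⟩
    have hlampos : 0 < lam := hlamdef ▸ div_pos hvpos hσpos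
    obtain ⟨t, htdef⟩ : ∃ t : ℝ, t = lam * B2 := ⟨_, rfl⟩
    have hlam2 : lam ^ 2 * B2 = 2 * L := by
      rw [hlamdef, div_pow, ← hσsq]
      field_simp
      linarith [hvsq]
    -- pointwise bound
    have hpt : ∀ z : Fin n → Bool,
        |∑ i, sgn (z i) * b i| ≤ t + (Real.exp (-(lam * t)) / lam) *
          (Real.exp (lam * ∑ i, sgn (z i) * b i) +
           Real.exp ((-lam) * ∑ i, sgn (z i) * b i)) := by
      intro z
      obtain ⟨S, hSdef⟩ : ∃ S : ℝ, S = ∑ i, sgn (z i) * b i := ⟨_, rfl⟩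
      rw [← hSdef]
      have h1 : lam * (|S| - t) ≤ Real.exp (lam * (|S| - t)) := by
        have := Real.add_one_le_exp (lam * (|S| - t))
        linarith
      have h2 : Real.exp (lam * (|S| - t)) = Real.exp (-(lam * t)) * Real.exp (lam * |S|) := by
        rw [← Real.exp_add]; congr 1; ring
      have h3 : Real.exp (lam * |S|) ≤ Real.exp (lam * S) + Real.exp ((-lam) * S) := by
        rcases abs_cases S with ⟨hc, _⟩ | ⟨hc, _⟩
        · rw [hc]
          nlinarith [Real.exp_pos ((-lam) * S)]
        · rw [hc, show lam * -S = (-lam) * S by ring]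
          nlinarith [Real.exp_pos (lam * S)]
      have h4 : |S| - t ≤ Real.exp (lam * (|S| - t)) / lam := by
        rw [le_div_iff₀ hlampos, mul_comm]
        exact h1
      have h5 : Real.exp (lam * (|S| - t)) / lam
          ≤ (Real.exp (-(lam * t)) / lam) * (Real.exp (lam * S) + Real.exp ((-lam) * S)) := by
        rw [h2]
        rw [div_mul_eq_mul_div, div_le_div_iff₀ hlampos hlampos]
        have := mul_le_mul_of_nonneg_left h3 (le_of_lt (Real.exp_pos (-(lam * t))))
        nlinarith [hlampos]
      linarith
    -- sum over Z
    have hsum : ∑ z ∈ Z, |∑ i, sgn (z i) * b i|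
        ≤ (Z.card : ℝ) * t + (Real.exp (-(lam * t)) / lam) *
          (∑ z : Fin n → Bool, Real.exp (lam * ∑ i, sgn (z i) * b i) +
           ∑ z : Fin n → Bool, Real.exp ((-lam) * ∑ i, sgn (z i) * b i)) := by
      have step1 : ∑ z ∈ Z, |∑ i, sgn (z i) * b i|
          ≤ ∑ z ∈ Z, (t + (Real.exp (-(lam * t)) / lam) *
              (Real.exp (lam * ∑ i, sgn (z i) * b i) +
               Real.exp ((-lam) * ∑ i, sgn (z i) * b i))) :=
        Finset.sum_le_sum fun z _ => hpt z
      have step2 : ∑ z ∈ Z, (t + (Real.exp (-(lam * t)) / lam) *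
              (Real.exp (lam * ∑ i, sgn (z i) * b i) +
               Real.exp ((-lam) * ∑ i, sgn (z i) * b i)))
          = (Z.card : ℝ) * t + (Real.exp (-(lam * t)) / lam) *
              (∑ z ∈ Z, Real.exp (lam * ∑ i, sgn (z i) * b i) +
               ∑ z ∈ Z, Real.exp ((-lam) * ∑ i, sgn (z i) * b i)) := by
        rw [Finset.sum_add_distrib, Finset.sum_const, ← Finset.sum_add_distrib, ← Finset.mul_sum]
        simp [nsmul_eq_mul]
      have hA : ∑ z ∈ Z, Real.exp (lam * ∑ i, sgn (z i) * b i)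
          ≤ ∑ z : Fin n → Bool, Real.exp (lam * ∑ i, sgn (z i) * b i) :=
        Finset.sum_le_sum_of_subset_of_nonneg (Finset.subset_univ Z)
          (fun z _ _ => le_of_lt (Real.exp_pos _))
      have hB : ∑ z ∈ Z, Real.exp ((-lam) * ∑ i, sgn (z i) * b i)
          ≤ ∑ z : Fin n → Bool, Real.exp ((-lam) * ∑ i, sgn (z i) * b i) :=
        Finset.sum_le_sum_of_subset_of_nonneg (Finset.subset_univ Z)
          (fun z _ _ => le_of_lt (Real.exp_pos _))
      have hc : (0:ℝ) ≤ Real.exp (-(lam * t)) / lam := by positivity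
      refine step1.trans (step2.le.trans ?_)
      exact add_le_add (le_refl _) (mul_le_mul_of_nonneg_left (add_le_add hA hB) hc)
    have hm1 := mgf_bound n b lam
    have hm2 := mgf_bound n b (-lam)
    rw [show (-lam) ^ 2 = lam ^ 2 by ring] at hm2
    rw [← hB2def] at hm1 hm2
    have e1 : Real.exp (-(lam * t)) * Real.exp (lam ^ 2 * B2 / 2) = Real.exp (-L) := by
      rw [← Real.exp_add]
      congr 1
      rw [htdef, show lam * (lam * B2) = lam ^ 2 * B2 from by ring]
      linarith [hlam2]
    have hexpL : Real.exp (-L) = 1 / (2 * r) := by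
      rw [Real.exp_neg, hLdef, Real.exp_log (by linarith)]
      rw [one_div]
    have htail : (Real.exp (-(lam * t)) / lam) * (2 * (2:ℝ) ^ n * Real.exp (lam ^ 2 * B2 / 2))
        = (2:ℝ) ^ n / (r * lam) := by
      rw [show (Real.exp (-(lam * t)) / lam) * (2 * (2:ℝ) ^ n * Real.exp (lam ^ 2 * B2 / 2))
          = (Real.exp (-(lam * t)) * Real.exp (lam ^ 2 * B2 / 2)) * (2 * (2:ℝ) ^ n) / lam by ring,
        e1, hexpL]
      field_simp
    have hbound : ∑ z ∈ Z, |∑ i, sgn (z i) * b i|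
        ≤ (Z.card : ℝ) * t + (Z.card : ℝ) / lam := by
      have hcpos : (0:ℝ) ≤ Real.exp (-(lam * t)) / lam := by positivity
      have hsum2 : (∑ z : Fin n → Bool, Real.exp (lam * ∑ i, sgn (z i) * b i) +
           ∑ z : Fin n → Bool, Real.exp ((-lam) * ∑ i, sgn (z i) * b i))
           ≤ 2 * (2:ℝ) ^ n * Real.exp (lam ^ 2 * B2 / 2) := by
        have h := add_le_add hm1 hm2
        linarith
      have h5 := mul_le_mul_of_nonneg_left hsum2 hcpos
      rw [htail] at h5
      have h6 : (2:ℝ) ^ n / (r * lam) ≤ (Z.card : ℝ) / lam := by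
        rw [show (2:ℝ) ^ n / (r * lam) = ((2:ℝ) ^ n / r) / lam by rw [div_div]]
        exact (div_le_div_iff_of_pos_right hlampos).2 hZ
      linarith [hsum]
    -- final numeric step
    have hlogr0 : (0:ℝ) ≤ Real.log r := by linarith
    obtain ⟨u, hudef⟩ : ∃ u : ℝ, u = Real.sqrt (Real.log r) := ⟨_, rfl⟩
    have hu : u ^ 2 = Real.log r := hudef ▸ Real.sq_sqrt hlogr0
    have hu0 : 0 ≤ u := hudef ▸ Real.sqrt_nonneg _
    have huhalf : 1 ≤ 2 * u := by nlinarith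
    have hv2u : v ≤ 2 * u := by
      rw [hvdef, show (2:ℝ) * u = Real.sqrt ((2 * u) ^ 2) from (Real.sqrt_sq (by linarith)).symm]
      exact Real.sqrt_le_sqrt (by nlinarith)
    have hfinal : t + 1 / lam ≤ 4 * u * σ := by
      have ht' : t = v * σ := by
        rw [htdef, hlamdef, ← hσsq]
        field_simp [hσpos.ne']
      have hl' : 1 / lam = σ / v := by
        rw [hlamdef]
        rw [one_div_div]
      rw [ht', hl']
      have hinv : σ / v ≤ σ := by
        rw [div_le_iff₀ hvpos]
        nlinarith [mul_le_mul_of_nonneg_left hv1 hσpos.le]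
      have hvs : v * σ ≤ 2 * u * σ := mul_le_mul_of_nonneg_right hv2u hσpos.le
      have hσu : σ ≤ 2 * u * σ := by nlinarith
      linarith
    calc ∑ z ∈ Z, |∑ i, sgn (z i) * b i|
        ≤ (Z.card : ℝ) * t + (Z.card : ℝ) / lam := hbound
      _ = (Z.card : ℝ) * (t + 1 / lam) := by ring
      _ ≤ (Z.card : ℝ) * (4 * u * σ) :=
          mul_le_mul_of_nonneg_left hfinal (Nat.cast_nonneg _)
      _ = (Z.card : ℝ) * (4 * Real.sqrt (Real.log r) * σ) := by rw [hudef]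

/-- With `S_h(z) = (ε₀/(2t₂L₂))·Σᵢ zᵢ‖xᵢ‖·(h(x̂ᵢ) − h(−x̂ᵢ))` as in
Statement 5, for every real `r ≥ 2` and every subset `Z ⊆ {−1,1}^n` with `|Z| ≥ 2^n/r`,
the average of `|S_h(z)|` over `Z` is at most `C·ε₀·√(ln r)/t₂(x)`. -/
theorem stmt_6 : ∃ C : ℝ, 0 < C ∧
    ∀ (d n : ℕ) (N : (Fin d → ℝ) → ℝ),
    (∀ x y : Fin d → ℝ, N (x + y) ≤ N x + N y) →
    (∀ (r : ℝ) (x : Fin d → ℝ), N (r • x) = |r| * N x) →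
    (∀ x : Fin d → ℝ, x ≠ 0 → 0 < N x) →
    ∀ (x : Fin n → Fin d → ℝ), (∀ i, 1 ≤ N (x i) ∧ N (x i) ≤ 2) →
    ∀ (t₂ : ℝ), 0 < t₂ →
    Real.sqrt ((∑ ε : Fin n → Bool, N (∑ i, sgn (ε i) • x i) ^ 2) / 2 ^ n)
      = t₂ * Real.sqrt (∑ i, N (x i) ^ 2) →
    ∀ (ε₀ : ℝ), 0 < ε₀ →
    ∀ (h : (Fin d → ℝ) → ℝ),
    (1 / (2 * ∑ i, N (x i))) *
        ∑ i, N (x i) * (h ((N (x i))⁻¹ • x i) ^ 2 + h (-((N (x i))⁻¹ • x i)) ^ 2) = 1 →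
    ∀ (r : ℝ), 2 ≤ r →
    ∀ (Z : Finset (Fin n → Bool)), (2 : ℝ) ^ n / r ≤ (Z.card : ℝ) →
    (1 / (Z.card : ℝ)) *
        ∑ z ∈ Z, |(ε₀ / (2 * t₂ * Real.sqrt (∑ i, N (x i) ^ 2))) *
          ∑ i, sgn (z i) * (N (x i) * (h ((N (x i))⁻¹ • x i) - h (-((N (x i))⁻¹ • x i))))|
      ≤ C * ε₀ * Real.sqrt (Real.log r) / t₂ := by
  refine ⟨8, by norm_num, ?_⟩
  intro d n N _ _ _ x hx t₂ ht₂ _ ε₀ hε₀ h hnorm r hr Z hZ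
  -- degenerate case n = 0 contradicts the normalization
  rcases Nat.eq_zero_or_pos n with hn | hn
  · subst hn
    simp at hnorm
  -- notation
  set c : ℝ := ε₀ / (2 * t₂ * Real.sqrt (∑ i, N (x i) ^ 2)) with hcdef
  set a : Fin n → ℝ :=
    fun i => N (x i) * (h ((N (x i))⁻¹ • x i) - h (-((N (x i))⁻¹ • x i))) with hadef
  have hrw : ∀ z : Fin n → Bool, c * (∑ i, sgn (z i) * a i) = ∑ i, sgn (z i) * (c * a i) := by
    intro z
    rw [Finset.mul_sum]
    exact Finset.sum_congr rfl fun i _ => by ring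
  have hZpos : (0:ℝ) < (Z.card : ℝ) := lt_of_lt_of_le (by positivity) hZ
  -- key: bound on √(∑ (c*a i)^2)
  have hSN2 : (n : ℝ) ≤ ∑ i, N (x i) ^ 2 := by
    calc (n : ℝ) = ∑ _i : Fin n, (1:ℝ) := by simp
      _ ≤ ∑ i, N (x i) ^ 2 :=
        Finset.sum_le_sum fun i _ => by nlinarith [(hx i).1, (hx i).2]
  have hSN2pos : (0:ℝ) < ∑ i, N (x i) ^ 2 := by
    have : (1:ℝ) ≤ (n:ℝ) := by exact_mod_cast hn
    linarith
  have hL1 : (n : ℝ) ≤ ∑ i, N (x i) := by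
    calc (n : ℝ) = ∑ _i : Fin n, (1:ℝ) := by simp
      _ ≤ ∑ i, N (x i) := Finset.sum_le_sum fun i _ => (hx i).1
  have hL1' : ∑ i, N (x i) ≤ 2 * n := by
    calc ∑ i, N (x i) ≤ ∑ _i : Fin n, (2:ℝ) := Finset.sum_le_sum fun i _ => (hx i).2
      _ = 2 * n := by simp [mul_comm]
  have hL1pos : (0:ℝ) < ∑ i, N (x i) := by
    have : (1:ℝ) ≤ (n:ℝ) := by exact_mod_cast hn
    linarith
  have hQ : ∑ i, N (x i) * (h ((N (x i))⁻¹ • x i) ^ 2 + h (-((N (x i))⁻¹ • x i)) ^ 2)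
      = 2 * ∑ i, N (x i) := by
    have h2L : (2 * ∑ i, N (x i)) ≠ 0 := by positivity
    calc ∑ i, N (x i) * (h ((N (x i))⁻¹ • x i) ^ 2 + h (-((N (x i))⁻¹ • x i)) ^ 2)
        = (2 * ∑ i, N (x i)) * ((1 / (2 * ∑ i, N (x i))) *
            ∑ i, N (x i) * (h ((N (x i))⁻¹ • x i) ^ 2 + h (-((N (x i))⁻¹ • x i)) ^ 2)) := by
          rw [← mul_assoc, mul_one_div, div_self h2L, one_mul]
      _ = 2 * ∑ i, N (x i) := by rw [hnorm, mul_one]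
  have ha2 : ∑ i, (a i) ^ 2 ≤ 16 * ∑ i, N (x i) ^ 2 := by
    have h1 : ∑ i, (a i) ^ 2
        ≤ ∑ i, 4 * (N (x i) * (h ((N (x i))⁻¹ • x i) ^ 2 + h (-((N (x i))⁻¹ • x i)) ^ 2)) := by
      refine Finset.sum_le_sum fun i _ => ?_
      have hN1 := (hx i).1
      have hN2 := (hx i).2
      set p := h ((N (x i))⁻¹ • x i)
      set q := h (-((N (x i))⁻¹ • x i))
      show (N (x i) * (p - q)) ^ 2 ≤ 4 * (N (x i) * (p ^ 2 + q ^ 2))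
      have hpq : (p - q) ^ 2 ≤ 2 * (p ^ 2 + q ^ 2) := by nlinarith [sq_nonneg (p + q)]
      have hNN : N (x i) ^ 2 ≤ 2 * N (x i) := by nlinarith
      calc (N (x i) * (p - q)) ^ 2 = N (x i) ^ 2 * (p - q) ^ 2 := by ring
        _ ≤ (2 * N (x i)) * (2 * (p ^ 2 + q ^ 2)) :=
            mul_le_mul hNN hpq (sq_nonneg _) (by linarith)
        _ = 4 * (N (x i) * (p ^ 2 + q ^ 2)) := by ring
    have h2 : ∑ i, 4 * (N (x i) * (h ((N (x i))⁻¹ • x i) ^ 2 + h (-((N (x i))⁻¹ • x i)) ^ 2))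
        = 8 * ∑ i, N (x i) := by
      rw [← Finset.mul_sum, hQ]; ring
    calc ∑ i, (a i) ^ 2 ≤ 8 * ∑ i, N (x i) := by rw [← h2]; exact h1
      _ ≤ 16 * (n : ℝ) := by linarith
      _ ≤ 16 * ∑ i, N (x i) ^ 2 := by linarith
  have hc2 : c ^ 2 = ε₀ ^ 2 / (4 * t₂ ^ 2 * ∑ i, N (x i) ^ 2) := by
    rw [hcdef, div_pow]
    congr 1
    rw [mul_pow, mul_pow, Real.sq_sqrt hSN2pos.le]
    ring
  have hb2 : ∑ i, (c * a i) ^ 2 ≤ (2 * ε₀ / t₂) ^ 2 := by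
    have e : ∑ i, (c * a i) ^ 2 = c ^ 2 * ∑ i, (a i) ^ 2 := by
      rw [Finset.mul_sum]
      exact Finset.sum_congr rfl fun i _ => by ring
    rw [e, hc2]
    rw [div_mul_eq_mul_div, div_le_iff₀ (by positivity)]
    have hmul := mul_le_mul_of_nonneg_left ha2 (by positivity : (0:ℝ) ≤ ε₀ ^ 2)
    calc ε₀ ^ 2 * ∑ i, (a i) ^ 2 ≤ ε₀ ^ 2 * (16 * ∑ i, N (x i) ^ 2) := hmul
      _ = (2 * ε₀ / t₂) ^ 2 * (4 * t₂ ^ 2 * ∑ i, N (x i) ^ 2) := by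
        field_simp
        ring
  have hsqrtb : Real.sqrt (∑ i, (c * a i) ^ 2) ≤ 2 * ε₀ / t₂ := by
    have := Real.sqrt_le_sqrt hb2
    rwa [Real.sqrt_sq (by positivity : (0:ℝ) ≤ 2 * ε₀ / t₂)] at this
  -- apply the averaging lemma
  have hmain := avg_bound n (fun i => c * a i) r hr Z hZ
  have hrwsum : ∑ z ∈ Z, |c * ∑ i, sgn (z i) * a i| = ∑ z ∈ Z, |∑ i, sgn (z i) * (c * a i)| :=
    Finset.sum_congr rfl fun z _ => by rw [hrw z]
  have hlogr0 : (0:ℝ) ≤ Real.sqrt (Real.log r) := Real.sqrt_nonneg _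
  calc (1 / (Z.card : ℝ)) * ∑ z ∈ Z, |c * ∑ i, sgn (z i) * a i|
      = (1 / (Z.card : ℝ)) * ∑ z ∈ Z, |∑ i, sgn (z i) * (c * a i)| := by rw [hrwsum]
    _ ≤ (1 / (Z.card : ℝ)) * ((Z.card : ℝ) *
          (4 * Real.sqrt (Real.log r) * Real.sqrt (∑ i, (c * a i) ^ 2))) :=
        mul_le_mul_of_nonneg_left hmain (by positivity)
    _ = 4 * Real.sqrt (Real.log r) * Real.sqrt (∑ i, (c * a i) ^ 2) := by
        field_simp
    _ ≤ 4 * Real.sqrt (Real.log r) * (2 * ε₀ / t₂) := by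
        exact mul_le_mul_of_nonneg_left hsqrtb (by positivity)
    _ = 8 * ε₀ * Real.sqrt (Real.log r) / t₂ := by ring
end

section
/- Let d ≥ 1 be an integer and let q be a real number with 1 ≤ q ≤ d/(2e). Then Σ_{t=0}^{d−1} q^t·(d−t−1)!/(d−1)! ≤ 2e. -/
open Finset

lemma aux_descFactorial_ge (n t : ℕ) (ht : t ≤ n) :
    ((n : ℝ) / Real.exp 1) ^ t ≤ (Nat.descFactorial n t : ℝ) := by
  rcases Nat.eq_zero_or_pos t with rfl | htpos
  · simp
  have htR : (0 : ℝ) < t := by exact_mod_cast htpos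
  have hE : (0 : ℝ) < Real.exp 1 := Real.exp_pos 1
  -- t^t / exp t ≤ t!
  have hfact : ((t : ℝ) / Real.exp 1) ^ t ≤ (Nat.factorial t : ℝ) := by
    have h := Real.pow_div_factorial_le_exp (x := (t : ℝ)) (by positivity) t
    have hft : (0 : ℝ) < (Nat.factorial t : ℝ) := by exact_mod_cast t.factorial_pos
    rw [div_le_iff₀ hft] at h
    rw [div_pow, div_le_iff₀ (by positivity), ← Real.exp_one_pow] at *
    nlinarith [pow_pos hE t]
  -- (n/t)^t * t! ≤ descFactorial n t
  have h2 : ((n : ℝ) / t) ^ t * (Nat.factorial t : ℝ) ≤ (Nat.descFactorial n t : ℝ) := by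
    have hkey : ((n : ℝ) / t) ^ t * (Nat.factorial t : ℝ)
        = ∏ i ∈ range t, ((n : ℝ) / t * ((t : ℝ) - i)) := by
      rw [Finset.prod_mul_distrib, Finset.prod_const, Finset.card_range]
      congr 1
      rw [← Nat.descFactorial_self t, Nat.descFactorial_eq_prod_range, Nat.cast_prod]
      exact Finset.prod_congr rfl fun i hi =>
        Nat.cast_sub (Finset.mem_range.mp hi).le
    rw [hkey, Nat.descFactorial_eq_prod_range, Nat.cast_prod]
    apply Finset.prod_le_prod
    · intro i hi
      have : (i : ℝ) ≤ t := by exact_mod_cast (Finset.mem_range.mp hi).le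
      have : (0 : ℝ) ≤ (t : ℝ) - i := by linarith
      positivity
    · intro i hi
      have hi' : (i : ℝ) < t := by exact_mod_cast Finset.mem_range.mp hi
      have hin : i ≤ n := le_trans (Finset.mem_range.mp hi).le ht
      rw [Nat.cast_sub hin, div_mul_eq_mul_div, div_le_iff₀ htR]
      have hn : (t : ℝ) ≤ n := by exact_mod_cast ht
      have hiR : (0 : ℝ) ≤ i := Nat.cast_nonneg i
      nlinarith
  calc ((n : ℝ) / Real.exp 1) ^ t
      = ((n : ℝ) / t) ^ t * ((t : ℝ) / Real.exp 1) ^ t := by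
        rw [← mul_pow]; congr 1; field_simp
    _ ≤ ((n : ℝ) / t) ^ t * (Nat.factorial t : ℝ) := by
        apply mul_le_mul_of_nonneg_left hfact (by positivity)
    _ ≤ (Nat.descFactorial n t : ℝ) := h2

/-- For an integer `d ≥ 1` and a real `q` with `1 ≤ q ≤ d/(2e)`, one has
`Σ_{t=0}^{d−1} q^t·(d−t−1)!/(d−1)! ≤ 2e`. -/
theorem stmt_13 (d : ℕ) (hd : 1 ≤ d) (q : ℝ) (hq1 : 1 ≤ q)
    (hq2 : q ≤ (d : ℝ) / (2 * Real.exp 1)) :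
    ∑ t ∈ Finset.range d,
        q ^ t * (Nat.factorial (d - t - 1) : ℝ) / (Nat.factorial (d - 1) : ℝ)
      ≤ 2 * Real.exp 1 := by
  have hE : (0 : ℝ) < Real.exp 1 := Real.exp_pos 1
  have h2e : (5 : ℝ) < 2 * Real.exp 1 := by nlinarith [Real.exp_one_gt_d9]
  have hd6 : (6 : ℕ) ≤ d := by
    by_contra h
    push_neg at h
    have hd5 : (d : ℝ) ≤ 5 := by exact_mod_cast Nat.lt_succ_iff.mp h
    have : q < 1 := lt_of_le_of_lt hq2 (by rw [div_lt_one (by positivity)]; linarith)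
    linarith
  set n := d - 1 with hn
  have hnd : (n : ℝ) = (d : ℝ) - 1 := by
    have : (1:ℕ) ≤ d := hd
    push_cast [hn, Nat.cast_sub this]
    ring
  have hq0 : (0 : ℝ) ≤ q := by linarith
  have hterm : ∀ t ∈ Finset.range d,
      q ^ t * (Nat.factorial (d - t - 1) : ℝ) / (Nat.factorial (d - 1) : ℝ)
        ≤ (3 / 5 : ℝ) ^ t := by
    intro t htm
    have htd : t < d := Finset.mem_range.mp htm
    have ht : t ≤ n := by omega
    have hdt : d - t - 1 = n - t := by omega
    have hDpos : 0 < Nat.descFactorial n t := by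
      refine Nat.pos_of_ne_zero fun h => ?_
      have := Nat.descFactorial_eq_zero_iff_lt.mp h
      omega
    have hDposR : (0 : ℝ) < (Nat.descFactorial n t : ℝ) := by exact_mod_cast hDpos
    have heq : q ^ t * (Nat.factorial (d - t - 1) : ℝ) / (Nat.factorial (d - 1) : ℝ)
        = q ^ t / (Nat.descFactorial n t : ℝ) := by
      rw [hdt, ← hn, ← Nat.factorial_mul_descFactorial ht]
      have hf : (0 : ℝ) < (Nat.factorial (n - t) : ℝ) := by
        exact_mod_cast (n - t).factorial_pos
      push_cast
      field_simp
    rw [heq]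
    have hlow : ((n : ℝ) / Real.exp 1) ^ t ≤ (Nat.descFactorial n t : ℝ) :=
      aux_descFactorial_ge n t ht
    have hnpos : (0 : ℝ) < (n : ℝ) := by
      rw [hnd]
      have : (6 : ℝ) ≤ (d : ℝ) := by exact_mod_cast hd6
      linarith
    have hne : (0 : ℝ) < ((n : ℝ) / Real.exp 1) ^ t := by positivity
    calc q ^ t / (Nat.descFactorial n t : ℝ)
        ≤ ((d : ℝ) / (2 * Real.exp 1)) ^ t / ((n : ℝ) / Real.exp 1) ^ t := by
          apply div_le_div₀ (by positivity) (pow_le_pow_left₀ hq0 hq2 t) hne hlow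
      _ = ((d : ℝ) / (2 * n)) ^ t := by
          rw [← div_pow]
          congr 1
          field_simp
      _ ≤ (3 / 5 : ℝ) ^ t := by
          apply pow_le_pow_left₀ (by positivity)
          rw [div_le_div_iff₀ (by linarith) (by norm_num)]
          have : (6 : ℝ) ≤ (d : ℝ) := by exact_mod_cast hd6
          rw [hnd]
          linarith
  calc ∑ t ∈ Finset.range d,
        q ^ t * (Nat.factorial (d - t - 1) : ℝ) / (Nat.factorial (d - 1) : ℝ)
      ≤ ∑ t ∈ Finset.range d, (3 / 5 : ℝ) ^ t := Finset.sum_le_sum hterm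
    _ ≤ 5 / 2 := by
        rw [geom_sum_eq (by norm_num : (3 / 5 : ℝ) ≠ 1)]
        have h0 : (0 : ℝ) < (3 / 5 : ℝ) ^ d := by positivity
        rw [div_le_iff_of_neg (by norm_num : (3 / 5 : ℝ) - 1 < 0)]
        linarith
    _ ≤ 2 * Real.exp 1 := by linarith
end

section
/- Let d ≥ 1, let p ≥ 2 and ε > 0 be real numbers, and let (h_π)_{π∈S_d} be a family of functions h_π : {−1,1}^d → ℝ satisfying (1/d!)·Σ_{π∈S_d} 𝔼_{z∼Unif{−1,1}^d}[h_π(z)²] ≤ 1. For a, b ∈ {−1,1}^d define H(a,b) = (1/d!)·Σ_{π∈S_d} 𝔼_{z∼Unif{−1,1}^d}[h_π(z)·(∏_{i=1}^d (1 + ε·d^{1/p}·zᵢ·aᵢ·b_{π(i)}) − 1)]. Then for every a, b ∈ {−1,1}^d, |H(a,b)| ≤ (1 + ε²·d^{2/p})^{d/2}. -/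
open Finset

lemma sgn_sq (t : Bool) : sgn t ^ 2 = 1 := by cases t <;> norm_num [sgn]

lemma sum_prod_sq (d : ℕ) (c : ℝ) (σ : Fin d → ℝ) (hσ : ∀ i, σ i ^ 2 = 1) :
    ∑ z : Fin d → Bool, ((∏ i, (1 + c * sgn (z i) * σ i)) - 1) ^ 2
      ≤ 2 ^ d * (1 + c ^ 2) ^ d := by
  have e1 : ∑ z : Fin d → Bool, ∏ i, (1 + c * sgn (z i) * σ i) ^ 2
      = ∏ i : Fin d, ∑ t : Bool, (1 + c * sgn t * σ i) ^ 2 :=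
    (Fintype.prod_sum (fun i t => (1 + c * sgn t * σ i) ^ 2)).symm
  have e1' : ∀ i : Fin d, ∑ t : Bool, (1 + c * sgn t * σ i) ^ 2 = 2 * (1 + c ^ 2) := by
    intro i
    rw [Fintype.sum_bool]
    simp only [sgn, if_pos, if_neg, Bool.false_eq_true, not_false_iff, ite_true, ite_false]
    linear_combination 2 * c ^ 2 * hσ i
  have e2 : ∑ z : Fin d → Bool, ∏ i, (1 + c * sgn (z i) * σ i)
      = ∏ i : Fin d, ∑ t : Bool, (1 + c * sgn t * σ i) :=
    (Fintype.prod_sum (fun i t => (1 + c * sgn t * σ i))).symm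
  have e2' : ∀ i : Fin d, ∑ t : Bool, (1 + c * sgn t * σ i) = 2 := by
    intro i; rw [Fintype.sum_bool]
    simp [sgn]; ring_nf
  have hcard : (Fintype.card (Fin d → Bool) : ℝ) = 2 ^ d := by
    simp [Fintype.card_fun]
  calc ∑ z : Fin d → Bool, ((∏ i, (1 + c * sgn (z i) * σ i)) - 1) ^ 2
      = (∑ z : Fin d → Bool, ∏ i, (1 + c * sgn (z i) * σ i) ^ 2)
        - 2 * (∑ z : Fin d → Bool, ∏ i, (1 + c * sgn (z i) * σ i))
        + (Fintype.card (Fin d → Bool) : ℝ) := by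
        simp_rw [sub_sq, mul_one, one_pow, ← Finset.prod_pow]
        rw [Finset.sum_add_distrib, Finset.sum_sub_distrib, ← Finset.mul_sum,
          Finset.sum_const, Finset.card_univ, nsmul_eq_mul, mul_one]
    _ ≤ 2 ^ d * (1 + c ^ 2) ^ d := by
        rw [e1, e2, Finset.prod_congr rfl (fun i _ => e1' i),
          Finset.prod_congr rfl (fun i _ => e2' i), Finset.prod_const, Finset.prod_const,
          hcard]
        simp only [Finset.card_univ, Fintype.card_fin]
        have h1 : (0:ℝ) ≤ 2 ^ d := by positivity
        nlinarith [pow_le_pow_left₀ (by norm_num : (0:ℝ) ≤ 1)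
          (by nlinarith [sq_nonneg c] : (1:ℝ) ≤ 1 + c ^ 2) d, mul_pow (2:ℝ) (1 + c ^ 2) d]

/-- With `(h_π)` a family of functions on `{−1,1}^d` indexed by
permutations satisfying `(1/d!)·Σ_π 𝔼_z[h_π(z)²] ≤ 1`, and
`H(a,b) = (1/d!)·Σ_π 𝔼_z[h_π(z)·(∏ᵢ(1 + ε·d^{1/p}·zᵢ·aᵢ·b_{π(i)}) − 1)]`, for every
`a, b ∈ {−1,1}^d` one has `|H(a,b)| ≤ (1 + ε²·d^{2/p})^{d/2}`. -/
theorem stmt_14 (d : ℕ) (hd : 1 ≤ d) (p : ℝ) (hp : 2 ≤ p) (ε : ℝ) (hε : 0 < ε)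
    (h : Equiv.Perm (Fin d) → (Fin d → Bool) → ℝ)
    (hnorm : (1 / (Nat.factorial d : ℝ)) *
        ∑ π : Equiv.Perm (Fin d), (∑ z : Fin d → Bool, h π z ^ 2) / 2 ^ d ≤ 1)
    (H : (Fin d → Bool) → (Fin d → Bool) → ℝ)
    (hH : ∀ a b, H a b = (1 / (Nat.factorial d : ℝ)) *
        ∑ π : Equiv.Perm (Fin d),
          (∑ z : Fin d → Bool, h π z *
            ((∏ i, (1 + ε * (d : ℝ) ^ ((1 : ℝ) / p) * sgn (z i) * sgn (a i) * sgn (b (π i)))) - 1))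
          / 2 ^ d)
    (a b : Fin d → Bool) :
    |H a b| ≤ (1 + ε ^ 2 * (d : ℝ) ^ ((2 : ℝ) / p)) ^ ((d : ℝ) / 2) := by
  set c : ℝ := ε * (d : ℝ) ^ ((1 : ℝ) / p) with hc
  set S : ℝ := ε ^ 2 * (d : ℝ) ^ ((2 : ℝ) / p) with hS
  have hcS : c ^ 2 = S := by
    rw [hc, hS, mul_pow, ← Real.rpow_natCast ((d:ℝ) ^ ((1:ℝ)/p)) 2,
      ← Real.rpow_mul (Nat.cast_nonneg d)]
    norm_num
    left; ring
  have hS0 : 0 ≤ S := by positivity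
  set w : ℝ := 1 / ((Nat.factorial d : ℝ) * 2 ^ d) with hw
  have hw0 : 0 < w := by
    rw [hw]; positivity
  have hfac : (0:ℝ) < (Nat.factorial d : ℝ) := by
    exact_mod_cast Nat.factorial_pos d
  -- generic reshaping lemma
  have key : ∀ F : Equiv.Perm (Fin d) → (Fin d → Bool) → ℝ,
      (1 / (Nat.factorial d : ℝ)) * ∑ π : Equiv.Perm (Fin d), (∑ z : Fin d → Bool, F π z) / 2 ^ d
        = ∑ q : Equiv.Perm (Fin d) × (Fin d → Bool), w * F q.1 q.2 := by
    intro F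
    rw [Fintype.sum_prod_type, Finset.mul_sum]
    refine Finset.sum_congr rfl fun π _ => ?_
    rw [Finset.sum_div, Finset.mul_sum]
    refine Finset.sum_congr rfl fun z _ => ?_
    rw [hw]
    have : (2:ℝ) ^ d ≠ 0 := by positivity
    field_simp
  set G : Equiv.Perm (Fin d) × (Fin d → Bool) → ℝ :=
    fun q => (∏ i, (1 + c * sgn (q.2 i) * (sgn (a i) * sgn (b (q.1 i))))) - 1 with hG
  have hHsum : H a b = ∑ q : Equiv.Perm (Fin d) × (Fin d → Bool), w * (h q.1 q.2 * G q) := by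
    rw [hH, key (fun π z => h π z *
      ((∏ i, (1 + c * sgn (z i) * sgn (a i) * sgn (b (π i)))) - 1))]
    refine Finset.sum_congr rfl fun q _ => ?_
    rw [hG]
    have : (∏ i, (1 + c * sgn (q.2 i) * sgn (a i) * sgn (b (q.1 i))))
        = ∏ i, (1 + c * sgn (q.2 i) * (sgn (a i) * sgn (b (q.1 i)))) :=
      Finset.prod_congr rfl fun i _ => by ring
    rw [this]
  set f1 : Equiv.Perm (Fin d) × (Fin d → Bool) → ℝ := fun q => Real.sqrt w * h q.1 q.2 with hf1
  set f2 : Equiv.Perm (Fin d) × (Fin d → Bool) → ℝ := fun q => Real.sqrt w * G q with hf2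
  have h1 : ∑ q : Equiv.Perm (Fin d) × (Fin d → Bool), f1 q ^ 2 ≤ 1 := by
    calc ∑ q : Equiv.Perm (Fin d) × (Fin d → Bool), f1 q ^ 2
        = ∑ q : Equiv.Perm (Fin d) × (Fin d → Bool), w * h q.1 q.2 ^ 2 := by
          refine Finset.sum_congr rfl fun q _ => ?_
          rw [hf1]; simp only
          rw [mul_pow, Real.sq_sqrt hw0.le]
      _ = (1 / (Nat.factorial d : ℝ)) *
            ∑ π : Equiv.Perm (Fin d), (∑ z : Fin d → Bool, h π z ^ 2) / 2 ^ d :=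
          (key (fun π z => h π z ^ 2)).symm
      _ ≤ 1 := hnorm
  have h2 : ∑ q : Equiv.Perm (Fin d) × (Fin d → Bool), f2 q ^ 2 ≤ (1 + S) ^ d := by
    have hGsum : ∀ π : Equiv.Perm (Fin d),
        ∑ z : Fin d → Bool, ((∏ i, (1 + c * sgn (z i) * (sgn (a i) * sgn (b (π i))))) - 1) ^ 2
          ≤ 2 ^ d * (1 + c ^ 2) ^ d := by
      intro π
      exact sum_prod_sq d c (fun i => sgn (a i) * sgn (b (π i)))
        (fun i => by rw [mul_pow, sgn_sq, sgn_sq, mul_one])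
    calc ∑ q : Equiv.Perm (Fin d) × (Fin d → Bool), f2 q ^ 2
        = w * ∑ q : Equiv.Perm (Fin d) × (Fin d → Bool), G q ^ 2 := by
          rw [Finset.mul_sum]
          refine Finset.sum_congr rfl fun q _ => ?_
          rw [hf2]; simp only
          rw [mul_pow, Real.sq_sqrt hw0.le]
      _ ≤ w * ((Nat.factorial d : ℝ) * (2 ^ d * (1 + c ^ 2) ^ d)) := by
          refine mul_le_mul_of_nonneg_left ?_ hw0.le
          rw [Fintype.sum_prod_type]
          calc ∑ π : Equiv.Perm (Fin d), ∑ z : Fin d → Bool, G (π, z) ^ 2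
              ≤ ∑ π : Equiv.Perm (Fin d), 2 ^ d * (1 + c ^ 2) ^ d := by
                refine Finset.sum_le_sum fun π _ => ?_
                exact hGsum π
            _ = (Nat.factorial d : ℝ) * (2 ^ d * (1 + c ^ 2) ^ d) := by
                rw [Finset.sum_const, Finset.card_univ, Fintype.card_perm, Fintype.card_fin,
                  nsmul_eq_mul]
      _ = (1 + S) ^ d := by
          rw [hcS, hw]
          have h2d : (2:ℝ) ^ d ≠ 0 := by positivity
          field_simp
  have hCS : (H a b) ^ 2 ≤ (1 + S) ^ d := by
    rw [hHsum]
    have e : ∑ q : Equiv.Perm (Fin d) × (Fin d → Bool), w * (h q.1 q.2 * G q)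
        = ∑ q : Equiv.Perm (Fin d) × (Fin d → Bool), f1 q * f2 q := by
      refine Finset.sum_congr rfl fun q _ => ?_
      rw [hf1, hf2]; simp only
      rw [mul_mul_mul_comm, Real.mul_self_sqrt hw0.le]
    rw [e]
    calc (∑ q : Equiv.Perm (Fin d) × (Fin d → Bool), f1 q * f2 q) ^ 2
        ≤ (∑ q : Equiv.Perm (Fin d) × (Fin d → Bool), f1 q ^ 2) *
          ∑ q : Equiv.Perm (Fin d) × (Fin d → Bool), f2 q ^ 2 :=
          Finset.sum_mul_sq_le_sq_mul_sq _ _ _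
      _ ≤ 1 * (1 + S) ^ d :=
          mul_le_mul h1 h2 (Finset.sum_nonneg fun q _ => sq_nonneg _) zero_le_one
      _ = (1 + S) ^ d := one_mul _
  calc |H a b| = Real.sqrt ((H a b) ^ 2) := (Real.sqrt_sq_eq_abs _).symm
    _ ≤ Real.sqrt ((1 + S) ^ d) := Real.sqrt_le_sqrt hCS
    _ = (1 + S) ^ ((d : ℝ) / 2) := by
        rw [Real.sqrt_eq_rpow, ← Real.rpow_natCast (1 + S) d,
          ← Real.rpow_mul (by linarith : (0:ℝ) ≤ 1 + S), mul_one_div]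
end
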